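/- arXiv:1109.2503 — 9 statements merged into one kernel-verified Lean document; each statement's English description precedes it below -/
import Mathlib

section
/- Let n ≥ 1 and let q : ℕ → ℍ be quaternionic coefficients with q n ≠ 0. Then the simple quaternionic polynomial p has a zero in ℍ, i.e., there exists x ∈ ℍ such that ∑_{m=0}^{n} (q m)·x^m = 0. -/
/-!
Niven's argument. The product `p * p̄` of `p` with its coefficientwise conjugate is fixed by
conjugation, so it has real coefficients and a root `x₀` in a copy of `ℂ` inside `ℍ`. Since `X`
is central, `(p * p̄)(x₀) = ∑ pᵢ c x₀ⁱ` with `c = p̄(x₀)`; if `c ≠ 0` this says that `c x₀ c⁻¹` is a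
root of `p`. If `c = 0`, then `p̄ = g * (X - x₀)`, hence `p = (X - x̄₀) * ḡ`, and a root of `ḡ`,
which has smaller degree, is a root of `p`.
-/

open Polynomial Finset MulOpposite
open scoped Quaternion

namespace Polynomial

section Ring

variable {R : Type*} [Ring R]

theorem eval_mul_eq_eval_mul_C_eval (p q : R[X]) (x : R) :
    (p * q).eval x = (p * C (q.eval x)).eval x := by
  induction p using Polynomial.induction_on' with
  | add p₁ p₂ h₁ h₂ => simp only [add_mul, eval_add, h₁, h₂]
  | monomial n a =>
    simp only [← C_mul_X_pow_eq_monomial, mul_assoc, X_pow_mul, eval_C_mul, eval_mul_X_pow, eval_C]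

theorem exists_eq_mul_X_sub_C_of_isRoot {p : R[X]} {a : R} (h : p.IsRoot a) :
    ∃ g, p = g * (X - C a) := by
  suffices ∀ p : R[X], ∃ g, p - C (p.eval a) = g * (X - C a) by
    simpa [h.eq_zero] using this p
  intro p
  induction p using Polynomial.induction_on' with
  | add p₁ p₂ h₁ h₂ =>
    obtain ⟨g₁, hg₁⟩ := h₁
    obtain ⟨g₂, hg₂⟩ := h₂
    exact ⟨g₁ + g₂, by rw [eval_add, C_add, add_mul, ← hg₁, ← hg₂]; abel⟩
  | monomial n c =>
    refine ⟨C c * ∑ i ∈ range n, X ^ i * C a ^ (n - 1 - i), ?_⟩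
    rw [mul_assoc, (commute_X (C a)).geom_sum₂_mul, ← C_mul_X_pow_eq_monomial, eval_C_mul,
      eval_X_pow, mul_sub, C_mul, C_pow]

theorem eval_X_sub_C_mul (w : R) (g : R[X]) (x : R) :
    ((X - C w) * g).eval x = g.eval x * x - w * g.eval x := by
  rw [sub_mul, eval_sub, (commute_X g).eq, eval_mul_X, eval_C_mul]

end Ring

section DivisionRing

variable {D : Type*} [DivisionRing D]

theorem eval_mul_C_of_ne_zero (p : D[X]) {c : D} (hc : c ≠ 0) (x : D) :
    (p * C c).eval x = p.eval (c * x * c⁻¹) * c := by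
  induction p using Polynomial.induction_on' with
  | add p₁ p₂ h₁ h₂ => simp only [add_mul, eval_add, h₁, h₂]
  | monomial n a =>
    have hpow := GroupWithZero.conj_pow₀ (s := n) (d := x) (inv_ne_zero hc)
    rw [inv_inv] at hpow
    rw [monomial_mul_C, eval_monomial, eval_monomial, hpow]
    simp [mul_assoc, hc]

theorem isRoot_mul_mul_inv_of_eval_mul_eq_zero {p q : D[X]} {x : D} (h : (p * q).eval x = 0)
    (hq : q.eval x ≠ 0) : p.IsRoot (q.eval x * x * (q.eval x)⁻¹) := by
  rw [eval_mul_eq_eval_mul_C_eval, eval_mul_C_of_ne_zero p hq] at h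
  exact (mul_eq_zero.mp h).resolve_right hq

theorem exists_isRoot_X_sub_C_mul {g : D[X]} (hg : g ≠ 0) (w : D)
    (hroot : 0 < g.natDegree → ∃ y, g.IsRoot y) : ∃ x, ((X - C w) * g).IsRoot x := by
  rcases Nat.eq_zero_or_pos g.natDegree with hdeg | hdeg
  · rw [eq_C_of_natDegree_eq_zero hdeg] at hg ⊢
    have ha : g.coeff 0 ≠ 0 := by simpa using hg
    refine ⟨(g.coeff 0)⁻¹ * w * g.coeff 0, ?_⟩
    simp [IsRoot, eval_X_sub_C_mul, ← mul_assoc, ha]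
  · obtain ⟨y, hy⟩ := hroot hdeg
    exact ⟨y, by simp [IsRoot, eval_X_sub_C_mul, hy.eq_zero]⟩

end DivisionRing

section StarRing

variable {R : Type*} [Semiring R] [StarRing R]

/-- The coefficientwise `star` of `p`, written through `opRingEquiv` so that it is visibly a ring
antihomomorphism. -/
noncomputable def conj (p : R[X]) : R[X] :=
  unop ((opRingEquiv R).symm (p.map (starRingEquiv : R ≃+* Rᵐᵒᵖ).toRingHom))

theorem opRingEquiv_op_conj (p : R[X]) :
    opRingEquiv R (op (conj p)) = p.map (starRingEquiv : R ≃+* Rᵐᵒᵖ).toRingHom := by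
  simp [conj]

@[simp]
theorem coeff_conj (p : R[X]) (n : ℕ) : (conj p).coeff n = star (p.coeff n) := by
  simpa using congrArg (fun P => unop (P.coeff n)) (opRingEquiv_op_conj p)

theorem conj_mul (p q : R[X]) : conj (p * q) = conj q * conj p := by
  simp [conj]

@[simp]
theorem conj_conj (p : R[X]) : conj (conj p) = p := by
  ext n
  simp

@[simp]
theorem natDegree_conj (p : R[X]) : (conj p).natDegree = p.natDegree := by
  have h := natDegree_opRingEquiv (op (conj p))
  rwa [opRingEquiv_op_conj, natDegree_map_eq_of_injective (starRingEquiv (R := R)).injective,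
    unop_op, eq_comm] at h

end StarRing

theorem conj_X_sub_C {R : Type*} [Ring R] [StarRing R] (a : R) :
    conj (X - C a) = X - C (star a) := by
  simp [conj]

end Polynomial

namespace Quaternion

theorem exists_isRoot_of_conj_eq_self {F : Polynomial ℍ} (hF : F.conj = F)
    (hdeg : 0 < F.natDegree) : ∃ x, F.IsRoot x := by
  have hreal : ∀ n, F.coeff n ∈ Set.range (algebraMap ℝ ℍ) := fun n =>
    ⟨(F.coeff n).re, (star_eq_self.mp (by rw [← coeff_conj, hF])).symm⟩
  obtain ⟨R, rfl⟩ := (mem_lifts F).mp ((lifts_iff_coeff_lifts F).mpr hreal)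
  rw [natDegree_map_eq_of_injective (algebraMap ℝ ℍ).injective] at hdeg
  obtain ⟨z, hz⟩ := IsAlgClosed.exists_aeval_eq_zero ℂ R (degree_ne_of_natDegree_ne hdeg.ne')
  exact ⟨ofComplex z, by rw [IsRoot, eval_map_algebraMap, aeval_algHom_apply, hz, map_zero]⟩

theorem exists_isRoot_of_natDegree_pos (p : Polynomial ℍ) (hp : 0 < p.natDegree) :
    ∃ x, p.IsRoot x := by
  induction h : p.natDegree using Nat.strong_induction_on generalizing p with
  | _ n IH =>
    have hp0 : p ≠ 0 := ne_zero_of_natDegree_gt hp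
    have hpc : p.conj ≠ 0 := ne_zero_of_natDegree_gt (by rwa [natDegree_conj])
    have hF : (p * p.conj).conj = p * p.conj := by rw [Polynomial.conj_mul, conj_conj]
    obtain ⟨x₀, hx₀⟩ := exists_isRoot_of_conj_eq_self hF
      (by rw [natDegree_mul hp0 hpc, natDegree_conj]; omega)
    by_cases hc : p.conj.eval x₀ = 0
    · obtain ⟨g, hg⟩ := exists_eq_mul_X_sub_C_of_isRoot hc
      have hpg : p = (X - C (star x₀)) * g.conj := by
        rw [← conj_conj p, hg, Polynomial.conj_mul, conj_X_sub_C]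
      have hg0 : g.conj ≠ 0 := by
        rintro h0
        exact hp0 (by rw [hpg, h0, mul_zero])
      have hdeg : n = g.conj.natDegree + 1 := by
        rw [← h, hpg, natDegree_mul (X_sub_C_ne_zero _) hg0, natDegree_X_sub_C, add_comm]
      rw [hpg]
      exact exists_isRoot_X_sub_C_mul hg0 _ fun hpos => IH _ (by omega) _ hpos rfl
    · exact ⟨_, isRoot_mul_mul_inv_of_eval_mul_eq_zero hx₀ hc⟩

end Quaternion

/-- Any simple quaternionic polynomial equation `∑_{m=0}^{n} (q m)·xᵐ = 0` with `n ≥ 1`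
and leading coefficient `q n ≠ 0` has a root in the quaternions. -/
theorem simple_quaternionic_polynomial_has_root
    (n : ℕ) (hn : 1 ≤ n) (q : ℕ → Quaternion ℝ) (hq : q n ≠ 0) :
    ∃ x : Quaternion ℝ, ∑ m ∈ Finset.range (n + 1), q m * x ^ m = 0 := by
  set p : Polynomial ℍ := ∑ m ∈ range (n + 1), monomial m (q m)
  have hcoeff : p.coeff n = q n := by simp [p, finsetSum_coeff, coeff_monomial]
  obtain ⟨x, hx⟩ := Quaternion.exists_isRoot_of_natDegree_pos p
    (hn.trans (le_natDegree_of_ne_zero (hcoeff ▸ hq)))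
  exact ⟨x, by simpa [p, IsRoot, eval_finsetSum] using hx⟩
end

section
/- Let n ∈ ℕ and let q : ℕ → ℍ with q n ≠ 0, and let p(x) = ∑_{m=0}^{n} (q m)·x^m. Then the zero set {x ∈ ℍ | p(x) = 0} is finite if and only if it has at most n elements. -/
/-!
Over a division ring, a zero `x ≠ a` of `g * (X - a)` gives the zero `(x - a) x (x - a)⁻¹`
of `g`, so by induction on the degree the zeros of `f ≠ 0` meet at most `natDegree f`
conjugacy classes (Gordon–Motzkin).

A quaternion satisfies `x² = 2 re(x) x - |x|²`, and both coefficients are conjugation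
invariants. Restricted to the solutions of a fixed real quadratic, every polynomial function
is affine `x ↦ u x + v`, so two distinct conjugate zeros make the whole sphere
`re = re x, |·| = |x|` consist of zeros; that sphere is infinite since `x` is not real.
So when the zero set is finite, each conjugacy class contains at most one zero.
-/

open Polynomial
open scoped Quaternion

namespace Polynomial

theorem exists_sub_C_eval_eq_mul_X_sub_C {R : Type*} [Ring R] (f : R[X]) (a : R) :
    ∃ g : R[X], f - C (f.eval a) = g * (X - C a) := by
  induction f using Polynomial.induction_on' with
  | add p q hp hq =>
    obtain ⟨gp, hgp⟩ := hp
    obtain ⟨gq, hgq⟩ := hq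
    exact ⟨gp + gq, by rw [eval_add, C_add, add_mul, ← hgp, ← hgq]; abel⟩
  | monomial n c =>
    refine ⟨C c * ∑ i ∈ Finset.range n, X ^ i * C a ^ (n - 1 - i), ?_⟩
    rw [mul_assoc, (commute_X (C a)).geom_sum₂_mul, eval_monomial, ← C_mul_X_pow_eq_monomial,
      C_mul, C_pow, mul_sub]

variable {D : Type*} [DivisionRing D]

theorem eval_mul_X_sub_C_eq_eval_conj_mul (g : D[X]) (a b : D) :
    (g * (X - C a)).eval b = g.eval ((b - a) * b * (b - a)⁻¹) * (b - a) := by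
  obtain rfl | hba := eq_or_ne b a
  · simp [eval_mul_X_sub_C]
  have hc : b - a ≠ 0 := sub_ne_zero.mpr hba
  induction g using Polynomial.induction_on' with
  | add p q hp hq => rw [add_mul, eval_add, hp, hq, eval_add, add_mul]
  | monomial n c =>
    have hpow := GroupWithZero.conj_pow₀ (s := n) (d := b) (inv_ne_zero hc)
    rw [inv_inv] at hpow
    rw [mul_sub, eval_sub, eval_mul_X, monomial_mul_C, eval_monomial, eval_monomial,
      eval_monomial, hpow, mul_assoc c ((b - a) * b ^ n * (b - a)⁻¹), inv_mul_cancel_right₀ hc,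
      mul_assoc c (b ^ n), ← pow_succ, pow_succ', sub_mul, mul_sub, mul_assoc]

theorem eq_or_exists_isConj_isRoot_of_isRoot_mul_X_sub_C {g : D[X]} {a x : D}
    (hx : (g * (X - C a)).IsRoot x) :
    x = a ∨ ∃ y, IsConj x y ∧ g.IsRoot y := by
  refine or_iff_not_imp_left.mpr fun hxa => ⟨(x - a) * x * (x - a)⁻¹, ?_, ?_⟩
  · exact GroupWithZero.isConj_iff₀.mpr ⟨x - a, sub_ne_zero.mpr hxa, rfl⟩
  · rw [IsRoot, eval_mul_X_sub_C_eq_eval_conj_mul] at hx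
    exact (mul_eq_zero.mp hx).resolve_right (sub_ne_zero.mpr hxa)

theorem encard_image_conjClassesMk_setOf_isRoot_le_natDegree {f : D[X]} (hf : f ≠ 0) :
    (ConjClasses.mk '' {x | f.IsRoot x}).encard ≤ f.natDegree := by
  induction h : f.natDegree generalizing f with
  | zero =>
    rw [eq_C_of_natDegree_eq_zero h] at hf ⊢
    simp [C_eq_zero.not.mp hf]
  | succ n ih =>
    obtain hempty | ⟨a, ha⟩ := {x | f.IsRoot x}.eq_empty_or_nonempty
    · rw [hempty, Set.image_empty, Set.encard_empty]
      exact zero_le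
    obtain ⟨g, hg⟩ := exists_sub_C_eval_eq_mul_X_sub_C f a
    rw [(show f.IsRoot a from ha).eq_zero, C_0, sub_zero] at hg
    subst hg
    have hg0 : g ≠ 0 := left_ne_zero_of_mul hf
    have hdeg : g.natDegree = n := by
      rw [natDegree_mul hg0 (X_sub_C_ne_zero a), natDegree_X_sub_C] at h
      omega
    have hsub : ConjClasses.mk '' {x | (g * (X - C a)).IsRoot x} ⊆
        insert (ConjClasses.mk a) (ConjClasses.mk '' {y | g.IsRoot y}) := by
      rintro _ ⟨x, hx, rfl⟩
      obtain rfl | ⟨y, hxy, hy⟩ := eq_or_exists_isConj_isRoot_of_isRoot_mul_X_sub_C hx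
      · exact Set.mem_insert _ _
      · exact Set.mem_insert_of_mem _ ⟨y, hy, (ConjClasses.mk_eq_mk_iff_isConj.mpr hxy).symm⟩
    calc _ ≤ _ := Set.encard_le_encard hsub
      _ ≤ (ConjClasses.mk '' {y | g.IsRoot y}).encard + 1 := Set.encard_insert_le _ _
      _ ≤ n + 1 := by gcongr; exact ih hg0 hdeg
      _ = (n + 1 : ℕ) := by push_cast; rfl

end Polynomial

section Quadric

variable {K A : Type*} [CommRing K] [Ring A] [Algebra K A]

theorem exists_pow_eq_smul_add_algebraMap_of_sq_eq (s t : K) (m : ℕ) :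
    ∃ α β : K, ∀ x : A, x ^ 2 = s • x - algebraMap K A t →
      x ^ m = α • x + algebraMap K A β := by
  induction m with
  | zero => exact ⟨0, 1, fun x _ => by simp⟩
  | succ m ih =>
    obtain ⟨α, β, h⟩ := ih
    refine ⟨α * s + β, -(α * t), fun x hx => ?_⟩
    rw [pow_succ, h x hx, add_mul, smul_mul_assoc, ← sq, hx, Algebra.algebraMap_eq_smul_one,
      Algebra.algebraMap_eq_smul_one, Algebra.algebraMap_eq_smul_one, smul_one_mul]
    module

theorem exists_eval_eq_mul_add_of_sq_eq (f : A[X]) (s t : K) :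
    ∃ u v : A, ∀ x : A, x ^ 2 = s • x - algebraMap K A t → f.eval x = u * x + v := by
  induction f using Polynomial.induction_on' with
  | add p q hp hq =>
    obtain ⟨up, vp, hp⟩ := hp
    obtain ⟨uq, vq, hq⟩ := hq
    refine ⟨up + uq, vp + vq, fun x hx => ?_⟩
    rw [eval_add, hp x hx, hq x hx, add_mul]
    abel
  | monomial n c =>
    obtain ⟨α, β, h⟩ := exists_pow_eq_smul_add_algebraMap_of_sq_eq (A := A) s t n
    exact ⟨c * algebraMap K A α, c * algebraMap K A β, fun x hx => by
      rw [eval_monomial, h x hx, Algebra.smul_def, mul_add, mul_assoc]⟩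

theorem eval_eq_zero_of_sq_eq_of_eval_eq_zero [NoZeroDivisors A] {f : A[X]} {s t : K}
    {a b x : A} (hab : a ≠ b) (ha : a ^ 2 = s • a - algebraMap K A t)
    (hb : b ^ 2 = s • b - algebraMap K A t) (hfa : f.eval a = 0) (hfb : f.eval b = 0)
    (hx : x ^ 2 = s • x - algebraMap K A t) : f.eval x = 0 := by
  obtain ⟨u, v, h⟩ := exists_eval_eq_mul_add_of_sq_eq f s t
  rw [h a ha] at hfa
  rw [h b hb] at hfb
  have hu : u = 0 := by
    have hu_mul : u * (a - b) = 0 := by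
      rw [mul_sub, sub_eq_zero]
      exact add_right_cancel (hfa.trans hfb.symm)
    exact (mul_eq_zero.mp hu_mul).resolve_right (sub_ne_zero.mpr hab)
  rw [h x hx, hu, zero_mul, zero_add]
  rwa [hu, zero_mul, zero_add] at hfa

end Quadric

namespace Quaternion

variable {R : Type*} [CommRing R]

theorem re_mul_comm (a b : ℍ[R]) : (a * b).re = (b * a).re := by
  simp only [re_mul]
  ring

theorem re_eq_of_isConj {x y : ℍ[R]} (h : IsConj x y) : y.re = x.re := by
  obtain ⟨c, hc⟩ := h
  calc y.re = (y * c * ↑c⁻¹).re := by rw [Units.mul_inv_cancel_right]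
    _ = (↑c⁻¹ * (c * x)).re := by rw [hc.eq, re_mul_comm]
    _ = x.re := by rw [Units.inv_mul_cancel_left]

theorem normSq_eq_of_isConj {x y : ℍ[R]} (h : IsConj x y) : normSq y = normSq x :=
  (isConj_iff_eq.mp ((normSq (R := R)).toMonoidHom.map_isConj h)).symm

theorem sq_eq_two_re_smul_sub_normSq (x : ℍ[R]) :
    x ^ 2 = (2 * x.re) • x - algebraMap R ℍ[R] (normSq x) := by
  rw [Algebra.smul_def, algebraMap_def, ← self_mul_star, star_eq_two_re_sub, mul_sub,
    coe_commutes, sq, sub_sub_cancel]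

theorem normSq_eq_re_sq_add_normSq_im (x : ℍ[R]) : normSq x = x.re ^ 2 + normSq x.im := by
  simp only [normSq_def', re_im, imI_im, imJ_im, imK_im]
  ring

theorem infinite_setOf_re_eq_normSq_eq {x : ℍ[ℝ]} (hx : x.im ≠ 0) :
    {z : ℍ[ℝ] | z.re = x.re ∧ normSq z = normSq x}.Infinite := by
  have hd : 0 < normSq x.im := lt_of_le_of_ne normSq_nonneg (normSq_ne_zero.mpr hx).symm
  rw [normSq_eq_re_sq_add_normSq_im x]
  generalize normSq x.im = d at hd ⊢
  have hinj : Set.InjOn (fun t : ℝ => (⟨x.re, √t, √(d - t), 0⟩ : ℍ[ℝ])) (Set.Icc 0 d) :=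
    fun t ht u hu htu => (Real.sqrt_inj ht.1 hu.1).mp (congrArg QuaternionAlgebra.imI htu)
  refine ((Set.Icc_infinite hd).image hinj).mono ?_
  rintro _ ⟨t, ⟨ht0, htd⟩, rfl⟩
  refine ⟨rfl, ?_⟩
  rw [normSq_def' (a := (⟨x.re, √t, √(d - t), 0⟩ : ℍ[ℝ]))]
  change x.re ^ 2 + √t ^ 2 + √(d - t) ^ 2 + 0 ^ 2 = _
  rw [Real.sq_sqrt ht0, Real.sq_sqrt (sub_nonneg.mpr htd)]
  ring

theorem injOn_conjClassesMk_setOf_isRoot {f : ℍ[ℝ][X]} (hfin : {x | f.IsRoot x}.Finite) :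
    Set.InjOn ConjClasses.mk {x | f.IsRoot x} := by
  intro x hx y hy hxy
  rw [ConjClasses.mk_eq_mk_iff_isConj] at hxy
  by_contra hne
  have him : x.im ≠ 0 := fun h => by
    have hcenter : x ∈ Set.center ℍ[ℝ] := by
      rw [← re_add_im x, h, add_zero, ← algebraMap_def]
      exact Set.algebraMap_mem_center x.re
    exact hne (hxy.eq_of_left_mem_center hcenter)
  have hy_sq : y ^ 2 = (2 * x.re) • y - algebraMap ℝ ℍ[ℝ] (normSq x) := by
    rw [← re_eq_of_isConj hxy, ← normSq_eq_of_isConj hxy]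
    exact sq_eq_two_re_smul_sub_normSq y
  refine (infinite_setOf_re_eq_normSq_eq him).mono (fun z hz => ?_) hfin
  have hz_sq : z ^ 2 = (2 * x.re) • z - algebraMap ℝ ℍ[ℝ] (normSq x) := by
    rw [← hz.1, ← hz.2]
    exact sq_eq_two_re_smul_sub_normSq z
  exact eval_eq_zero_of_sq_eq_of_eval_eq_zero hne (sq_eq_two_re_smul_sub_normSq x) hy_sq hx hy
    hz_sq

end Quaternion

/-- A simple quaternionic polynomial with `q n ≠ 0` has finitely many zeros
if and only if it has at most `n` zeros. -/
theorem finite_zero_set_iff_encard_le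
    (n : ℕ) (q : ℕ → Quaternion ℝ) (hq : q n ≠ 0) :
    {x : Quaternion ℝ | ∑ m ∈ Finset.range (n + 1), q m * x ^ m = 0}.Finite ↔
      {x : Quaternion ℝ | ∑ m ∈ Finset.range (n + 1), q m * x ^ m = 0}.encard ≤ n := by
  set f : ℍ[ℝ][X] := ∑ m ∈ Finset.range (n + 1), monomial m (q m)
  have hroots : {x : ℍ[ℝ] | ∑ m ∈ Finset.range (n + 1), q m * x ^ m = 0} = {x | f.IsRoot x} := by
    ext x
    simp [f, eval_finsetSum]
  have hf : f ≠ 0 := fun h => hq <| by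
    simpa [f, finsetSum_coeff, coeff_monomial] using congrArg (coeff · n) h
  have hdeg : f.natDegree ≤ n :=
    natDegree_sum_le_of_forall_le _ _ fun m hm =>
      (natDegree_monomial_le _).trans (Finset.mem_range_succ_iff.mp hm)
  rw [hroots]
  refine ⟨fun hfin => ?_, Set.finite_of_encard_le_coe⟩
  calc {x | f.IsRoot x}.encard
      = (ConjClasses.mk '' {x | f.IsRoot x}).encard :=
        (Quaternion.injOn_conjClassesMk_setOf_isRoot hfin).encard_image.symm
    _ ≤ f.natDegree := encard_image_conjClassesMk_setOf_isRoot_le_natDegree hf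
    _ ≤ n := by exact_mod_cast hdeg
end

section
/- Let n ∈ ℕ and let q : ℕ → ℍ with q n ≠ 0, and let p(x) = ∑_{m=0}^{n} (q m)·x^m. Then there exists a finite set S ⊆ ℍ with at most n elements such that every zero of p is conjugate to some element of S; that is, the zeros of p are distributed in at most n conjugacy classes of ℍ. -/
/-!
Write `p = ∑ q m X^m` and `p̄ = ∑ (star (q m)) X^m`. The product `P = p̄ p` has real coefficients,
and since real numbers are central in `ℍ`, `P(x) = ∑ᵢ star (q i) p(x) xⁱ` vanishes at every zero `x`
of `p`. A real polynomial vanishing at `x` also vanishes at every conjugate of `x`, and every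
quaternion is conjugate to a complex number `ζ` with `0 ≤ im ζ`; so each zero of `p` is conjugate to
a root of `P` in the closed upper half-plane. On the real line `P(t) = |p(t)|² ≥ 0`, so real roots
of `P` are at least double, while non-real roots come in conjugate pairs. As `deg P ≤ 2n`, the
closed upper half-plane contains at most `n` distinct roots of `P`.
-/

open Polynomial Quaternion Finset ComplexConjugate

theorem Finset.sum_sum_eq_zero_of_antisymm {ι M : Type*} [AddCommGroup M] [IsAddTorsionFree M]
    (s : Finset ι) (f : ι → ι → M) (hf : ∀ i j, f j i = -f i j) :
    ∑ i ∈ s, ∑ j ∈ s, f i j = 0 := by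
  refine self_eq_neg.1 ?_
  simp only [← sum_neg_distrib]
  rw [sum_comm]
  exact sum_congr rfl fun i _ => sum_congr rfl fun j _ => hf i j

namespace Polynomial

theorem aeval_units_conj {R A : Type*} [CommSemiring R] [Ring A] [Algebra R A] (P : R[X])
    (u : Aˣ) (z : A) : aeval (u * z * u⁻¹ : A) P = u * aeval z P * u⁻¹ := by
  simpa [ConjAct.units_smul_def] using
    aeval_algHom_apply (MulSemiringAction.toAlgEquiv R A (ConjAct.toConjAct u)) z P

theorem one_lt_rootMultiplicity_of_nonneg {P : ℝ[X]} (hP : P ≠ 0)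
    (hnonneg : ∀ s, 0 ≤ P.eval s) {t : ℝ} (ht : P.IsRoot t) : 1 < P.rootMultiplicity t := by
  have hmin : IsLocalMin (fun s => P.eval s) t :=
    Filter.Eventually.of_forall fun s => ht.eq_zero.trans_le (hnonneg s)
  refine (one_lt_rootMultiplicity_iff_isRoot hP).2 ⟨ht, ?_⟩
  simpa only [Polynomial.deriv, IsRoot.def] using hmin.deriv_eq_zero

theorem count_roots_map_le_count_conj (P : ℝ[X]) (w : ℂ) :
    (P.map (algebraMap ℝ ℂ)).roots.count w ≤ (P.map (algebraMap ℝ ℂ)).roots.count (conj w) := by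
  have hfix : (P.map (algebraMap ℝ ℂ)).map (starRingEnd ℂ) = P.map (algebraMap ℝ ℂ) := by
    rw [Polynomial.map_map]; congr 1; ext; simp
  have := count_map_roots_of_injective (P.map (algebraMap ℝ ℂ)) (starRingEnd ℂ).injective (conj w)
  rwa [Multiset.count_map_eq_count' _ _ (starRingEnd ℂ).injective, hfix, ← count_roots] at this

theorem two_mul_card_roots_im_nonneg_le {P : ℝ[X]} (hP : P ≠ 0)
    (hreal : ∀ t : ℝ, P.IsRoot t → 1 < P.rootMultiplicity t) :
    2 * #{ζ ∈ (P.map (algebraMap ℝ ℂ)).roots.toFinset | 0 ≤ ζ.im} ≤ P.natDegree := by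
  set Q := P.map (algebraMap ℝ ℂ)
  set U := {ζ ∈ Q.roots.toFinset | 0 ≤ ζ.im}
  have hQ : Q ≠ 0 := map_ne_zero hP
  have hU : ∀ ζ, ζ ∈ U ↔ ζ ∈ Q.roots ∧ 0 ≤ ζ.im := by simp [U]
  -- A point of both `U` and `conj U` is real, hence a root of multiplicity at least two.
  have hle : U.val + U.val.map conj ≤ Q.roots := by
    refine Multiset.le_iff_count.2 fun w => ?_
    rw [Multiset.count_add, ← Complex.conj_conj w,
      Multiset.count_map_eq_count' _ _ (starRingEnd ℂ).injective, Complex.conj_conj,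
      Multiset.count_eq_of_nodup U.nodup, Multiset.count_eq_of_nodup U.nodup]
    split_ifs with hw hw' hw'
    · have him : w.im = 0 := by
        have := ((hU _).1 hw').2
        rw [Complex.conj_im] at this
        linarith [((hU _).1 hw).2]
      have hw_eq : w = (w.re : ℂ) := Complex.ext rfl (by simp [him])
      have hroot : P.IsRoot w.re := by
        have := (mem_roots hQ).1 ((hU _).1 hw).1
        rwa [hw_eq, ← Complex.coe_algebraMap, isRoot_map_iff (algebraMap ℝ ℂ).injective] at this
      rw [count_roots, hw_eq]
      exact (hreal _ hroot).trans_le (le_rootMultiplicity_map hQ _)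
    · simpa using Multiset.one_le_count_iff_mem.2 ((hU _).1 hw).1
    · simpa using (Multiset.one_le_count_iff_mem.2 ((hU _).1 hw').1).trans
        (by simpa using count_roots_map_le_count_conj P (conj w))
    · simp
  calc 2 * #U = Multiset.card (U.val + U.val.map conj) := by
        rw [Multiset.card_add, Multiset.card_map, card_val, two_mul]
    _ ≤ Multiset.card Q.roots := Multiset.card_le_card hle
    _ ≤ Q.natDegree := card_roots' Q
    _ = P.natDegree := natDegree_map _

end Polynomial

namespace Quaternion

theorem exists_conj_eq_coeComplex (x : ℍ) :
    ∃ a : ℍ, a ≠ 0 ∧ x = a * ((⟨x.re, ‖x.im‖⟩ : ℂ) : ℍ) * a⁻¹ := by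
  set v := x.im
  set s := ‖v‖
  set I : ℍ := ((Complex.I : ℂ) : ℍ)
  have hI : I * I = -1 := by rw [← coeComplex_mul, Complex.I_mul_I]; ext <;> simp
  have hvv : v * v = -((s * s : ℝ) : ℍ) := by
    rw [← normSq_eq_norm_mul_self, ← self_mul_star, star_im, mul_neg, neg_neg]
  have hz : ((⟨x.re, s⟩ : ℂ) : ℍ) = x.re + s • I := by ext <;> simp [I]
  suffices ∃ a : ℍ, a ≠ 0 ∧ a * (s • I) = v * a by
    obtain ⟨a, ha, hav⟩ := this
    refine ⟨a, ha, (eq_mul_inv_iff_mul_eq₀ ha).2 ?_⟩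
    rw [hz, mul_add, hav, ← coe_commutes, ← add_mul, re_add_im]
  by_cases hv : v = -(s • I)
  · -- `J` stays opaque so that `re_mul`, … fire before its components are unfolded.
    obtain ⟨J, hJ⟩ : ∃ J : ℍ, J = ⟨0, 0, 1, 0⟩ := ⟨_, rfl⟩
    refine ⟨J, fun h => by simpa [hJ] using congrArg (·.imJ) h, ?_⟩
    rw [hv]
    apply Quaternion.ext <;> simp [I, re_mul, imI_mul, imJ_mul, imK_mul] <;> simp [hJ]
  · -- `(v + s • I) * (s • I) = v * (v + s • I)` since `v` and `s • I` both square to `-s²`.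
    refine ⟨v + s • I, fun h => hv (add_eq_zero_iff_eq_neg.1 h), ?_⟩
    rw [add_mul, mul_add, smul_mul_smul, hI, hvv, add_comm]
    congr 1
    ext <;> simp

theorem exists_mem_roots_conj_of_aeval_eq_zero {P : ℝ[X]} (hP : P ≠ 0) {x : ℍ}
    (hx : aeval x P = 0) :
    ∃ ζ ∈ (P.map (algebraMap ℝ ℂ)).roots, 0 ≤ ζ.im ∧ ∃ a : ℍ, a ≠ 0 ∧ x = a * ζ * a⁻¹ := by
  obtain ⟨a, ha, hxa⟩ := exists_conj_eq_coeComplex x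
  set ζ : ℂ := ⟨x.re, ‖x.im‖⟩
  refine ⟨ζ, ?_, norm_nonneg _, a, ha, hxa⟩
  have hζ : aeval (ζ : ℍ) P = 0 := by
    have h := aeval_units_conj P (Units.mk0 a ha)⁻¹ x
    rw [hx, mul_zero, zero_mul, hxa] at h
    simpa [mul_assoc, ha] using h
  rw [mem_roots (map_ne_zero hP), IsRoot, eval_map_algebraMap]
  refine ofComplex.toRingHom.injective ?_
  simpa [← aeval_algHom_apply] using hζ

/-- The polynomial `p̄ p`, where `p = ∑_{m ≤ n} q m X^m` and `p̄ = ∑_{m ≤ n} star (q m) X^m`.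
The coefficients of `p̄ p` are real; taking real parts termwise does not change the sum. -/
noncomputable def companionPoly (n : ℕ) (q : ℕ → ℍ) : ℝ[X] :=
  ∑ i ∈ range (n + 1), ∑ j ∈ range (n + 1), C (star (q i) * q j).re * X ^ (i + j)

variable {n : ℕ} {q : ℕ → ℍ}

theorem aeval_companionPoly (x : ℍ) :
    aeval x (companionPoly n q) =
      ∑ i ∈ range (n + 1), star (q i) * (∑ m ∈ range (n + 1), q m * x ^ m) * x ^ i := by
  set w := fun i j => star (q i) * q j
  have : IsAddTorsionFree ℍ := .of_isTorsionFree ℝ ℍ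
  have him : ∑ i ∈ range (n + 1), ∑ j ∈ range (n + 1), (w i j).im * x ^ (i + j) = 0 := by
    refine sum_sum_eq_zero_of_antisymm _ _ fun i j => ?_
    rw [show w j i = star (w i j) by simp [w], im_star, neg_mul, add_comm]
  have hsplit : ∀ i j,
      w i j * x ^ (i + j) = ((w i j).re : ℍ) * x ^ (i + j) + (w i j).im * x ^ (i + j) :=
    fun i j => by rw [← add_mul, re_add_im]
  calc aeval x (companionPoly n q)
      = ∑ i ∈ range (n + 1), ∑ j ∈ range (n + 1), ((w i j).re : ℍ) * x ^ (i + j) := by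
        simp [companionPoly, w]
    _ = ∑ i ∈ range (n + 1), ∑ j ∈ range (n + 1), ((w i j).re : ℍ) * x ^ (i + j) +
          ∑ i ∈ range (n + 1), ∑ j ∈ range (n + 1), (w i j).im * x ^ (i + j) := by
        rw [him, add_zero]
    _ = ∑ i ∈ range (n + 1), ∑ j ∈ range (n + 1), w i j * x ^ (i + j) := by
        simp only [hsplit, sum_add_distrib]
    _ = _ := by
        simp only [w, mul_sum, sum_mul, mul_assoc, ← pow_add, add_comm]

theorem eval_companionPoly (t : ℝ) :
    (companionPoly n q).eval t = normSq (∑ m ∈ range (n + 1), q m * (t : ℍ) ^ m) := by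
  set p := ∑ m ∈ range (n + 1), q m * (t : ℍ) ^ m
  refine coe_injective ?_
  calc (((companionPoly n q).eval t : ℝ) : ℍ) = aeval (t : ℍ) (companionPoly n q) := by
        rw [← Quaternion.algebraMap_def, aeval_algebraMap_apply_eq_algebraMap_eval]
    _ = ∑ i ∈ range (n + 1), star (q i * (t : ℍ) ^ i) * p := by
        rw [aeval_companionPoly]
        refine sum_congr rfl fun i _ => ?_
        rw [star_mul, ← Quaternion.coe_pow, star_coe, ← coe_commutes, mul_assoc]
    _ = ((normSq p : ℝ) : ℍ) := by rw [← sum_mul, ← star_sum, Quaternion.star_mul_self]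

theorem coeff_companionPoly_two_mul : (companionPoly n q).coeff (2 * n) = normSq (q n) := by
  simp only [companionPoly, finsetSum_coeff, coeff_C_mul_X_pow]
  rw [sum_eq_single_of_mem n (self_mem_range_succ n),
    sum_eq_single_of_mem n (self_mem_range_succ n), if_pos (two_mul n),
    Quaternion.star_mul_self, re_coe]
  · intro j hj hjn
    rw [if_neg (by simp only [mem_range] at hj; omega)]
  · intro i hi hin
    refine sum_eq_zero fun j hj => if_neg ?_
    simp only [mem_range] at hi hj; omega

theorem natDegree_companionPoly_le : (companionPoly n q).natDegree ≤ 2 * n := by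
  refine natDegree_sum_le_of_forall_le _ _ fun i hi =>
    natDegree_sum_le_of_forall_le _ _ fun j hj => ?_
  refine (natDegree_C_mul_X_pow_le _ _).trans ?_
  simp only [mem_range] at hi hj; omega

theorem companionPoly_ne_zero (hq : q n ≠ 0) : companionPoly n q ≠ 0 := fun h => by
  simpa [h, hq] using (coeff_companionPoly_two_mul (n := n) (q := q)).symm

end Quaternion

/-- The zeros of a simple quaternionic polynomial with `q n ≠ 0` are distributed in
at most `n` conjugacy classes: there is a finite set `S` of at most `n` quaternions
such that every zero is conjugate to some element of `S`. -/
theorem zeros_in_at_most_n_conjugacy_classes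
    (n : ℕ) (q : ℕ → Quaternion ℝ) (hq : q n ≠ 0) :
    ∃ S : Finset (Quaternion ℝ), S.card ≤ n ∧
      ∀ x : Quaternion ℝ, ∑ m ∈ Finset.range (n + 1), q m * x ^ m = 0 →
        ∃ s ∈ S, ∃ a : Quaternion ℝ, a ≠ 0 ∧ x = a * s * a⁻¹ := by
  classical
  set P := companionPoly n q
  have hP : P ≠ 0 := companionPoly_ne_zero hq
  refine ⟨{ζ ∈ (P.map (algebraMap ℝ ℂ)).roots.toFinset | 0 ≤ ζ.im}.image (↑), ?_, fun x hx => ?_⟩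
  · have hroots := two_mul_card_roots_im_nonneg_le hP fun t =>
      one_lt_rootMultiplicity_of_nonneg hP fun s => (eval_companionPoly s).symm ▸ normSq_nonneg
    exact card_image_le.trans (by linarith [natDegree_companionPoly_le (n := n) (q := q)])
  · have hxP : aeval x P = 0 := by simp [P, aeval_companionPoly, hx]
    obtain ⟨ζ, hζ, him, a, ha, hxa⟩ := exists_mem_roots_conj_of_aeval_eq_zero hP hxP
    exact ⟨ζ, mem_image_of_mem _ (by simp [hζ, him]), a, ha, hxa⟩
end

section
/- Let n ∈ ℕ and let q : ℕ → ℝ be real coefficients with q n ≠ 0. Then a quaternion x ∈ ℍ satisfies ∑_{m=0}^{n} ((q m : ℍ))·x^m = 0 if and only if there exists a complex number z with ∑_{m=0}^{n} (q m : ℂ)·z^m = 0 such that x is conjugate in ℍ to the quaternion z.re + z.im·i. In other words, the quaternionic solution set is the union of the real complex roots together with the full conjugacy classes of the nonreal complex roots. -/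
/-!
Every quaternion `x` is conjugate to the complex number `x.re + ‖x.im‖ i`: the pure quaternions
`u = x.im` and `w = ‖x.im‖ i` have the same square `-‖x.im‖²`, so `u (u + w) = (u + w) w`.
For a real polynomial `p` and `a ≠ 0`, the map `z ↦ a z a⁻¹` is an ℝ-algebra embedding `ℂ → ℍ`,
hence `p (a z a⁻¹) = a p(z) a⁻¹` vanishes exactly when `p(z)` does.
-/

noncomputable section

/-- The quaternion `a + b·i` corresponding to the complex number `z = a + b·I`. -/
def cq (z : ℂ) : Quaternion ℝ := ⟨z.re, z.im, 0, 0⟩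

open Quaternion

theorem cq_eq_coeComplex (z : ℂ) : cq z = (z : ℍ) := rfl

theorem mul_add_eq_add_mul_of_mul_self_eq {R : Type*} [NonUnitalNonAssocSemiring R] {u w : R}
    (h : u * u = w * w) : u * (u + w) = (u + w) * w := by
  rw [mul_add, add_mul, h, add_comm]

theorem AlgHom.sum_algebraMap_mul_pow_eq_zero_iff {R K B : Type*} [CommSemiring R]
    [DivisionRing K] [Semiring B] [Nontrivial B] [Algebra R K] [Algebra R B]
    (f : K →ₐ[R] B) (s : Finset ℕ) (q : ℕ → R) (x : K) :
    ∑ m ∈ s, algebraMap R B (q m) * f x ^ m = 0 ↔ ∑ m ∈ s, algebraMap R K (q m) * x ^ m = 0 := by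
  simp_rw [← f.commutes, ← map_pow, ← map_mul, ← map_sum]
  exact map_eq_zero f

namespace Quaternion

theorem exists_eq_conj_coeComplex (x : ℍ) : ∃ z : ℂ, ∃ a : ℍ, a ≠ 0 ∧ x = a * z * a⁻¹ := by
  set r := ‖x.im‖
  set w : ℍ := ((r * Complex.I : ℂ) : ℍ)
  have hsq : x.im * x.im = w * w := by
    rw [← coeComplex_mul, ← sq, im_sq, normSq_eq_norm_mul_self]
    ext <;> simp [r]
  by_cases h : x.im + w = 0
  · refine ⟨x.re - r * Complex.I, 1, one_ne_zero, ?_⟩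
    calc x = x.re + x.im := (re_add_im x).symm
      _ = x.re - w := by rw [eq_neg_of_add_eq_zero_left h, sub_eq_add_neg]
      _ = _ := by ext <;> simp [w]
  · refine ⟨x.re + r * Complex.I, x.im + w, h, ?_⟩
    rw [eq_mul_inv_iff_mul_eq₀ h]
    calc x * (x.im + w) = (x.re + x.im) * (x.im + w) := by rw [re_add_im]
      _ = x.re * (x.im + w) + x.im * (x.im + w) := add_mul _ _ _
      _ = (x.im + w) * x.re + (x.im + w) * w := by
          rw [(coe_commute _ _).eq, mul_add_eq_add_mul_of_mul_self_eq hsq]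
      _ = (x.im + w) * ((x.re + r * Complex.I : ℂ) : ℍ) := by simp [w, mul_add]

theorem sum_mul_pow_conj_coeComplex_eq_zero_iff (s : Finset ℕ) (q : ℕ → ℝ) (z : ℂ) {a : ℍ}
    (ha : a ≠ 0) :
    ∑ m ∈ s, (q m : ℍ) * (a * z * a⁻¹) ^ m = 0 ↔ ∑ m ∈ s, (q m : ℂ) * z ^ m = 0 := by
  let φ : ℂ →ₐ[ℝ] ℍ :=
    (MulSemiringAction.toAlgEquiv ℝ ℍ (ConjAct.toConjAct (Units.mk0 a ha))).toAlgHom.comp ofComplex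
  have hφ : φ z = a * z * a⁻¹ := by simp [φ, ConjAct.units_smul_def]
  simpa [hφ, algebraMap_def] using φ.sum_algebraMap_mul_pow_eq_zero_iff s q z

end Quaternion

theorem real_coeff_quaternionic_roots_general
    (n : ℕ) (q : ℕ → ℝ) (x : Quaternion ℝ) :
    ∑ m ∈ Finset.range (n + 1), ((q m : ℝ) : Quaternion ℝ) * x ^ m = 0 ↔
      ∃ z : ℂ, (∑ m ∈ Finset.range (n + 1), (q m : ℂ) * z ^ m = 0) ∧
        ∃ a : Quaternion ℝ, a ≠ 0 ∧ x = a * cq z * a⁻¹ := by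
  simp only [cq_eq_coeComplex]
  constructor
  · intro hx
    obtain ⟨z, a, ha, rfl⟩ := exists_eq_conj_coeComplex x
    exact ⟨z, (sum_mul_pow_conj_coeComplex_eq_zero_iff _ q z ha).1 hx, a, ha, rfl⟩
  · rintro ⟨z, hz, a, ha, rfl⟩
    exact (sum_mul_pow_conj_coeComplex_eq_zero_iff _ q z ha).2 hz

/-- Solving a simple quaternionic polynomial equation with *real* coefficients:
`x ∈ ℍ` is a zero iff `x` is conjugate (in `ℍ`) to some complex root `z` of the
same polynomial.  (A real root `z` is conjugate only to itself, so the solution set is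
the union of the real roots together with the full conjugacy classes of the
nonreal complex roots.) -/
theorem real_coeff_quaternionic_roots
    (n : ℕ) (q : ℕ → ℝ) (hq : q n ≠ 0) (x : Quaternion ℝ) :
    ∑ m ∈ Finset.range (n + 1), ((q m : ℝ) : Quaternion ℝ) * x ^ m = 0 ↔
      ∃ z : ℂ, (∑ m ∈ Finset.range (n + 1), (q m : ℂ) * z ^ m = 0) ∧
        ∃ a : Quaternion ℝ, a ≠ 0 ∧ x = a * cq z * a⁻¹ :=
  real_coeff_quaternionic_roots_general n q x
end
end

section
/- Let n ∈ ℕ and let q : ℕ → ℂ be complex coefficients with q n ≠ 0. Then a quaternion x ∈ ℍ satisfies ∑_{m=0}^{n} ((q m : ℍ))·x^m = 0 if and only if either (i) there exists z ∈ ℂ with ∑_{m=0}^{n} (q m)·z^m = 0 and x equals the quaternion z.re + z.im·i, or (ii) there exists z ∈ ℂ such that both z and its complex conjugate conj z are roots of ∑_{m=0}^{n} (q m)·t^m and x is conjugate in ℍ to the quaternion z.re + z.im·i. -/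
noncomputable section

/-!
Every quaternion `x` is conjugate to `cq z` for `z = Re x + ‖Im x‖·I`, and hence is a root of the
real quadratic `(X - z)(X - conj z) = X² - 2 Re z · X + |z|²`. Its coefficients are central in `ℍ`,
so dividing `P` by it gives `P(x) = α x + β` with `αX + β` the remainder. If `α ≠ 0`, then `x` is
itself complex; otherwise `β = 0` as well, the quadratic divides `P`, and `z`, `conj z` are roots.
Conversely, if `z ≠ conj z` are both roots, then the quadratic divides `P` and vanishes on the
whole conjugacy class of `cq z`.
-/

open Polynomial ComplexConjugate
open scoped Quaternion

def cqHom : ℂ →+* ℍ[ℝ] where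
  toFun := cq
  map_one' := by ext <;> simp [cq]
  map_mul' z w := by
    ext <;> simp only [Quaternion.re_mul, Quaternion.imI_mul, Quaternion.imJ_mul,
      Quaternion.imK_mul] <;> simp [cq]
  map_zero' := by ext <;> simp [cq]
  map_add' z w := by ext <;> simp only [Quaternion.re_add, Quaternion.imI_add, Quaternion.imJ_add,
      Quaternion.imK_add] <;> simp [cq]

lemma cqHom_apply (z : ℂ) : cqHom z = cq z := rfl

lemma cqHom_comp_algebraMap : cqHom.comp (algebraMap ℝ ℂ) = algebraMap ℝ ℍ[ℝ] := by
  ext r <;> simp [cqHom_apply, cq]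

lemma eval₂_cqHom_cqHom (P : ℂ[X]) (z : ℂ) : eval₂ cqHom (cqHom z) P = cqHom (P.eval z) :=
  (hom_eval₂ P (RingHom.id ℂ) cqHom z).symm

lemma eval₂_cqHom_map (f : ℝ[X]) (x : ℍ[ℝ]) :
    eval₂ cqHom x (f.map (algebraMap ℝ ℂ)) = aeval x f := by
  rw [eval₂_map, cqHom_comp_algebraMap, aeval_def]

lemma eval₂_cqHom_mul_map (p : ℂ[X]) (f : ℝ[X]) (x : ℍ[ℝ]) :
    eval₂ cqHom x (p * f.map (algebraMap ℝ ℂ)) = eval₂ cqHom x p * aeval x f := by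
  rw [eval₂_mul_noncomm, eval₂_cqHom_map]
  intro k
  rw [coeff_map, ← RingHom.comp_apply, cqHom_comp_algebraMap]
  exact Algebra.commutes _ x

lemma aeval_units_conj {R A : Type*} [CommSemiring R] [Semiring A] [Algebra R A]
    (u : Aˣ) (y : A) (p : R[X]) : aeval (u * y * ↑u⁻¹) p = u * aeval y p * ↑u⁻¹ := by
  simpa [ConjAct.units_smul_def] using
    aeval_algHom_apply (MulSemiringAction.toAlgEquiv R A (ConjAct.toConjAct u)) y p

def realQuad (z : ℂ) : ℝ[X] := X ^ 2 - C (2 * z.re) * X + C (Complex.normSq z)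

lemma map_realQuad (z : ℂ) :
    (realQuad z).map (algebraMap ℝ ℂ) = (X - C z) * (X - C (conj z)) := by
  have hsum : algebraMap ℝ ℂ (2 * z.re) = z + conj z := by
    rw [Complex.add_conj, Complex.coe_algebraMap]
  have hprod : algebraMap ℝ ℂ (Complex.normSq z) = z * conj z := (Complex.mul_conj z).symm
  simp only [realQuad, Polynomial.map_add, Polynomial.map_sub, Polynomial.map_mul,
    Polynomial.map_pow, map_X, map_C]
  rw [hsum, hprod, C_add, C_mul]
  ring

lemma aeval_conj_cqHom_realQuad (z : ℂ) {a : ℍ[ℝ]} (ha : a ≠ 0) :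
    aeval (a * cqHom z * a⁻¹) (realQuad z) = 0 := by
  have hz : aeval (cqHom z) (realQuad z) = 0 := by
    rw [← eval₂_cqHom_map, eval₂_cqHom_cqHom, map_realQuad]
    simp
  simpa [hz] using aeval_units_conj (Units.mk0 a ha) (cqHom z) (realQuad z)

lemma monic_map_realQuad (z : ℂ) : ((realQuad z).map (algebraMap ℝ ℂ)).Monic :=
  map_realQuad z ▸ (monic_X_sub_C z).mul (monic_X_sub_C _)

lemma modByMonic_map_realQuad (P : ℂ[X]) (z : ℂ) :
    P %ₘ (realQuad z).map (algebraMap ℝ ℂ) =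
      C ((P %ₘ (realQuad z).map (algebraMap ℝ ℂ)).coeff 1) * X
        + C ((P %ₘ (realQuad z).map (algebraMap ℝ ℂ)).coeff 0) := by
  apply eq_X_add_C_of_natDegree_le_one
  have hdeg : ((realQuad z).map (algebraMap ℝ ℂ)).natDegree = 2 := by
    rw [map_realQuad, natDegree_mul (X_sub_C_ne_zero z) (X_sub_C_ne_zero _), natDegree_X_sub_C,
      natDegree_X_sub_C]
  have := natDegree_modByMonic_lt P (monic_map_realQuad z) (fun h => by simp [h] at hdeg)
  omega

lemma eval₂_cqHom_eq_modByMonic {P : ℂ[X]} {z : ℂ} {x : ℍ[ℝ]} (hx : aeval x (realQuad z) = 0) :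
    eval₂ cqHom x P = cqHom ((P %ₘ (realQuad z).map (algebraMap ℝ ℂ)).coeff 1) * x
      + cqHom ((P %ₘ (realQuad z).map (algebraMap ℝ ℂ)).coeff 0) := by
  conv_lhs => rw [← modByMonic_add_div P ((realQuad z).map (algebraMap ℝ ℂ)), mul_comm,
    modByMonic_map_realQuad]
  rw [eval₂_add, eval₂_cqHom_mul_map, hx, mul_zero, add_zero]
  simp

lemma exists_eq_conj_cqHom (x : ℍ[ℝ]) :
    ∃ a : ℍ[ℝ], a ≠ 0 ∧ x = a * cqHom ⟨x.re, ‖x.im‖⟩ * a⁻¹ := by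
  -- The conjugator is `‖im x‖ - (im x)·i`; it vanishes only for `x = Re x - ‖im x‖·i`,
  -- which `j` conjugates to `Re x + ‖im x‖·i`.
  set s := ‖x.im‖
  have hs : s ^ 2 = x.imI ^ 2 + x.imJ ^ 2 + x.imK ^ 2 := by
    rw [sq, ← Quaternion.normSq_eq_norm_mul_self, Quaternion.normSq_def']
    simp
  suffices ∃ a : ℍ[ℝ], a ≠ 0 ∧ x * a = a * cqHom ⟨x.re, s⟩ by
    obtain ⟨a, ha, hxa⟩ := this
    exact ⟨a, ha, by rw [← hxa, mul_inv_cancel_right₀ ha]⟩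
  by_cases hx : x.imI = -s ∧ x.imJ = 0 ∧ x.imK = 0
  · set j : ℍ[ℝ] := ⟨0, 0, 1, 0⟩ with hj
    refine ⟨j, fun h => by simpa [hj] using congrArg QuaternionAlgebra.imJ h, ?_⟩
    apply Quaternion.ext <;> simp only [Quaternion.re_mul, Quaternion.imI_mul, Quaternion.imJ_mul,
      Quaternion.imK_mul] <;> simp [hj, cqHom_apply, cq, hx.1, hx.2.1, hx.2.2]
  · set a : ℍ[ℝ] := ⟨s + x.imI, 0, -x.imK, x.imJ⟩ with ha
    refine ⟨a, fun h => hx ?_, ?_⟩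
    · have h0 := congrArg QuaternionAlgebra.re h
      have h2 := congrArg QuaternionAlgebra.imJ h
      have h3 := congrArg QuaternionAlgebra.imK h
      simp [ha] at h0 h2 h3
      exact ⟨by linarith, h3, h2⟩
    · apply Quaternion.ext <;> simp only [Quaternion.re_mul, Quaternion.imI_mul, Quaternion.imJ_mul,
        Quaternion.imK_mul] <;> simp [ha, cqHom_apply, cq] <;> nlinarith [hs]

lemma isRoot_of_map_realQuad_dvd {P : ℂ[X]} {z : ℂ}
    (h : (realQuad z).map (algebraMap ℝ ℂ) ∣ P) :
    P.IsRoot z ∧ P.IsRoot (conj z) := by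
  rw [map_realQuad] at h
  exact ⟨dvd_iff_isRoot.mp (dvd_trans (dvd_mul_right _ _) h),
    dvd_iff_isRoot.mp (dvd_trans (dvd_mul_left _ _) h)⟩

lemma eval₂_cqHom_eq_zero {P : ℂ[X]} {x : ℍ[ℝ]} (hx : eval₂ cqHom x P = 0) :
    (∃ z : ℂ, P.IsRoot z ∧ x = cqHom z) ∨
      ∃ z : ℂ, P.IsRoot z ∧ P.IsRoot (conj z) ∧ ∃ a : ℍ[ℝ], a ≠ 0 ∧ x = a * cqHom z * a⁻¹ := by
  obtain ⟨a, ha, hxa⟩ := exists_eq_conj_cqHom x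
  set z : ℂ := ⟨x.re, ‖x.im‖⟩
  have hlin := (eval₂_cqHom_eq_modByMonic (P := P)
    (hxa ▸ aeval_conj_cqHom_realQuad z ha)).symm.trans hx
  set μ := (realQuad z).map (algebraMap ℝ ℂ)
  set r := P %ₘ μ
  by_cases h1 : r.coeff 1 = 0
  · right
    have h0 : r.coeff 0 = 0 := by simpa [h1] using hlin
    have hdvd : μ ∣ P := by
      rw [← modByMonic_eq_zero_iff_dvd (monic_map_realQuad z), modByMonic_map_realQuad, h0, h1]
      simp
    obtain ⟨hz, hz'⟩ := isRoot_of_map_realQuad_dvd hdvd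
    exact ⟨z, hz, hz', a, ha, hxa⟩
  · left
    have hxw : x = cqHom (-r.coeff 0 / r.coeff 1) := by
      refine mul_left_cancel₀ ((map_ne_zero cqHom).mpr h1) ?_
      rw [← map_mul, mul_div_cancel₀ _ h1, map_neg]
      exact eq_neg_of_add_eq_zero_left hlin
    refine ⟨_, cqHom.injective ?_, hxw⟩
    rw [← eval₂_cqHom_cqHom, ← hxw, hx, map_zero]

lemma eval₂_cqHom_conj_eq_zero {P : ℂ[X]} {z : ℂ} (hz : P.IsRoot z) (hz' : P.IsRoot (conj z))
    {a : ℍ[ℝ]} (ha : a ≠ 0) : eval₂ cqHom (a * cqHom z * a⁻¹) P = 0 := by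
  by_cases hreal : conj z = z
  · have hcentral : cqHom z = algebraMap ℝ ℍ[ℝ] z.re := by
      rw [← cqHom_comp_algebraMap, RingHom.comp_apply, Complex.coe_algebraMap,
        Complex.conj_eq_iff_re.mp hreal]
    rw [hcentral, ← Algebra.commutes, mul_inv_cancel_right₀ ha, ← hcentral, eval₂_cqHom_cqHom, hz,
      map_zero]
  · have hcop : IsCoprime (X - C z) (X - C (conj z)) :=
      isCoprime_X_sub_C_of_isUnit_sub (sub_ne_zero.mpr (Ne.symm hreal)).isUnit
    obtain ⟨g, hg⟩ := hcop.mul_dvd (dvd_iff_isRoot.mpr hz) (dvd_iff_isRoot.mpr hz')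
    rw [← map_realQuad] at hg
    rw [hg, mul_comm, eval₂_cqHom_mul_map, aeval_conj_cqHom_realQuad z ha, mul_zero]

theorem eval₂_cqHom_eq_zero_iff {P : ℂ[X]} {x : ℍ[ℝ]} :
    eval₂ cqHom x P = 0 ↔ (∃ z : ℂ, P.IsRoot z ∧ x = cqHom z) ∨
      ∃ z : ℂ, P.IsRoot z ∧ P.IsRoot (conj z) ∧ ∃ a : ℍ[ℝ], a ≠ 0 ∧ x = a * cqHom z * a⁻¹ := by
  refine ⟨eval₂_cqHom_eq_zero, ?_⟩
  rintro (⟨z, hz, rfl⟩ | ⟨z, hz, hz', a, ha, rfl⟩)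
  · rw [eval₂_cqHom_cqHom, hz, map_zero]
  · exact eval₂_cqHom_conj_eq_zero hz hz' ha

theorem complex_coeff_quaternionic_roots_general
    (n : ℕ) (q : ℕ → ℂ) (x : Quaternion ℝ) :
    ∑ m ∈ Finset.range (n + 1), cq (q m) * x ^ m = 0 ↔
      ((∃ z : ℂ, (∑ m ∈ Finset.range (n + 1), q m * z ^ m = 0) ∧ x = cq z) ∨
       (∃ z : ℂ, (∑ m ∈ Finset.range (n + 1), q m * z ^ m = 0) ∧
          (∑ m ∈ Finset.range (n + 1), q m * ((starRingEnd ℂ) z) ^ m = 0) ∧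
          ∃ a : Quaternion ℝ, a ≠ 0 ∧ x = a * cq z * a⁻¹)) := by
  set P : ℂ[X] := ∑ m ∈ Finset.range (n + 1), C (q m) * X ^ m
  have hx : ∑ m ∈ Finset.range (n + 1), cq (q m) * x ^ m = eval₂ cqHom x P := by
    simp only [P, eval₂_finsetSum, C_mul_X_pow_eq_monomial, eval₂_monomial, cqHom_apply]
  have hz (z : ℂ) : ∑ m ∈ Finset.range (n + 1), q m * z ^ m = 0 ↔ P.IsRoot z := by
    simp [P, eval_finsetSum]
  simp only [hx, hz]
  exact eval₂_cqHom_eq_zero_iff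

/-- Solving a simple quaternionic polynomial equation with *complex* coefficients:
`x ∈ ℍ` is a zero iff either (i) `x` equals (the quaternion corresponding to) a complex
root `z` of the polynomial, or (ii) there is a complex root `z` such that its conjugate
is also a root and `x` is conjugate in `ℍ` to the quaternion corresponding to `z`. -/
theorem complex_coeff_quaternionic_roots
    (n : ℕ) (q : ℕ → ℂ) (hq : q n ≠ 0) (x : Quaternion ℝ) :
    ∑ m ∈ Finset.range (n + 1), cq (q m) * x ^ m = 0 ↔
      ((∃ z : ℂ, (∑ m ∈ Finset.range (n + 1), q m * z ^ m = 0) ∧ x = cq z) ∨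
       (∃ z : ℂ, (∑ m ∈ Finset.range (n + 1), q m * z ^ m = 0) ∧
          (∑ m ∈ Finset.range (n + 1), q m * ((starRingEnd ℂ) z) ^ m = 0) ∧
          ∃ a : Quaternion ℝ, a ≠ 0 ∧ x = a * cq z * a⁻¹)) :=
  complex_coeff_quaternionic_roots_general n q x
end
end

section
/- Let n ∈ ℕ, let q : ℕ → ℍ with q n ≠ 0 and with constant coefficient q 0 = 0 or q 0 = 1, and let p(x) = ∑_{m=0}^{n} (q m)·x^m with derived polynomials f₁, f₂ ∈ ℂ[t]. Then the zero set {x ∈ ℍ | p(x) = 0} is finite if and only if there is no nonreal complex number z with f₁(z) = f₂(z) = 0 and f₁(conj z) = f₂(conj z) = 0 (equivalently, the greatest common divisor of f₁, f₂, f̄₁, f̄₂ has no nonreal complex root). -/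
noncomputable section

/-- The quaternion imaginary unit `k`. -/
def qk : Quaternion ℝ := ⟨0, 0, 0, 1⟩

/-- Evaluation of the first derived polynomial `f₁(t) = ∑ t₁⁽ᵐ⁾ tᵐ`,
where `q m = t₁⁽ᵐ⁾ + t₂⁽ᵐ⁾·j` and `t₁⁽ᵐ⁾ = (q m).re + (q m).imI·I`. -/
def f1 (n : ℕ) (q : ℕ → Quaternion ℝ) (z : ℂ) : ℂ :=
  ∑ m ∈ Finset.range (n + 1), (⟨(q m).re, (q m).imI⟩ : ℂ) * z ^ m

/-- Evaluation of the second derived polynomial `f₂(t) = ∑ t₂⁽ᵐ⁾ tᵐ`,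
where `t₂⁽ᵐ⁾ = (q m).imJ + (q m).imK·I`. -/
def f2 (n : ℕ) (q : ℕ → Quaternion ℝ) (z : ℂ) : ℂ :=
  ∑ m ∈ Finset.range (n + 1), (⟨(q m).imJ, (q m).imK⟩ : ℂ) * z ^ m

/-- Evaluation of `f̄₁`, obtained from `f₁` by conjugating each coefficient. -/
def f1b (n : ℕ) (q : ℕ → Quaternion ℝ) (z : ℂ) : ℂ :=
  ∑ m ∈ Finset.range (n + 1), (starRingEnd ℂ) (⟨(q m).re, (q m).imI⟩ : ℂ) * z ^ m

/-- Evaluation of `f̄₂`, obtained from `f₂` by conjugating each coefficient. -/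
def f2b (n : ℕ) (q : ℕ → Quaternion ℝ) (z : ℂ) : ℂ :=
  ∑ m ∈ Finset.range (n + 1), (starRingEnd ℂ) (⟨(q m).imJ, (q m).imK⟩ : ℂ) * z ^ m

/-- Evaluation of the discriminant polynomial `p̃ = f₁·f̄₁ + f₂·f̄₂`. -/
def ptilde (n : ℕ) (q : ℕ → Quaternion ℝ) (z : ℂ) : ℂ :=
  f1 n q z * f1b n q z + f2 n q z * f2b n q z

/-!
Every quaternion `y` on the sphere `[x] = {y | Re y = Re x, |y| = |x|}` satisfies
`y² = 2 Re(x) y - |x|²`, so `p` restricted to `[x]` is affine, `y ↦ A + B y`. Hence `p` has at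
most one zero on `[x]` unless it vanishes on all of it, and, since `p(z) = f₁(z) + f₂(z̄) j` for
complex `z`, a nonreal sphere is a sphere of zeros exactly when its complex points `z, z̄` are
common roots of `f₁, f₂`. Conversely, if `p(x) = 0` then `p(y) = B (y - x)` on `[x]`, so for the
complex point `z` of `[x]` one gets `p(z̄)^* p(z) = |B|² (x z - z x)` (quaternionic conjugate `^*`), whose `ℂ`-component
`p̃(z) = f₁ f̄₁ + f₂ f̄₂` therefore vanishes. As `p̃ = |f₁|² + |f₂|²` on `ℝ`, it is a nonzero
polynomial, and the zeros of `p` lie on finitely many spheres.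
-/

open scoped Quaternion ComplexConjugate
open Quaternion

section QuadraticRelation

variable {A : Type*} [Ring A] [Algebra ℝ A] (s r : ℝ)

theorem exists_pow_eq_of_sq_eq (m : ℕ) :
    ∃ α β : ℝ, ∀ x : A, x ^ 2 = s • x - algebraMap ℝ A r →
      x ^ m = algebraMap ℝ A α + β • x := by
  induction m with
  | zero => exact ⟨1, 0, fun x _ => by simp⟩
  | succ m ih =>
    obtain ⟨α, β, h⟩ := ih
    refine ⟨-β * r, α + β * s, fun x hx => ?_⟩
    rw [pow_succ, h x hx, add_mul, smul_mul_assoc, ← sq, hx, ← Algebra.smul_def]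
    simp only [Algebra.algebraMap_eq_smul_one]
    module

theorem exists_sum_mul_pow_eq_of_sq_eq (S : Finset ℕ) (c : ℕ → A) :
    ∃ a b : A, ∀ x : A, x ^ 2 = s • x - algebraMap ℝ A r →
      ∑ m ∈ S, c m * x ^ m = a + b * x := by
  choose α β h using fun m => exists_pow_eq_of_sq_eq (A := A) s r m
  refine ⟨∑ m ∈ S, α m • c m, ∑ m ∈ S, β m • c m, fun x hx => ?_⟩
  rw [Finset.sum_mul, ← Finset.sum_add_distrib]
  refine Finset.sum_congr rfl fun m _ => ?_
  rw [h m x hx, mul_add, ← Algebra.commutes, ← Algebra.smul_def, mul_smul_comm, smul_mul_assoc]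

theorem sub_sub_mul_sub_of_sq_eq {x y : A} (hx : x ^ 2 = s • x - algebraMap ℝ A r)
    (hy : y ^ 2 = s • y - algebraMap ℝ A r) :
    (y - (algebraMap ℝ A s - x)) * (y - x) = x * y - y * x := by
  have hx' : x * x = s • x - algebraMap ℝ A r := by rw [← sq, hx]
  have hy' : y * y = s • y - algebraMap ℝ A r := by rw [← sq, hy]
  simp only [sub_mul, mul_sub, ← Algebra.smul_def, hx', hy']
  abel

end QuadraticRelation

def qj : ℍ := ⟨0, 0, 1, 0⟩

@[simp] theorem qj_re : qj.re = 0 := rfl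
@[simp] theorem qj_imI : qj.imI = 0 := rfl
@[simp] theorem qj_imJ : qj.imJ = 1 := rfl
@[simp] theorem qj_imK : qj.imK = 0 := rfl

/-- The components of `a = symplFst a + symplSnd a * j` in `ℍ = ℂ ⊕ ℂ j`, so `f1`, `f2` have
coefficients `symplFst (q m)`, `symplSnd (q m)`. -/
def symplFst (a : ℍ) : ℂ := ⟨a.re, a.imI⟩

def symplSnd (a : ℍ) : ℂ := ⟨a.imJ, a.imK⟩

theorem symplFst_smul (r : ℝ) (a : ℍ) : symplFst (r • a) = r * symplFst a := by
  apply Complex.ext <;> simp [symplFst]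

theorem coe_add_coe_mul_qj_eq_zero_iff (a b : ℂ) :
    (a + b * qj : ℍ) = 0 ↔ a = 0 ∧ b = 0 := by
  refine ⟨fun h => ?_, fun ⟨ha, hb⟩ => by simp [ha, hb]⟩
  have h1 := congrArg QuaternionAlgebra.re h
  have h2 := congrArg QuaternionAlgebra.imI h
  have h3 := congrArg QuaternionAlgebra.imJ h
  have h4 := congrArg QuaternionAlgebra.imK h
  simp [re_mul, imI_mul, imJ_mul, imK_mul] at h1 h2 h3 h4
  exact ⟨Complex.ext h1 h2, Complex.ext h3 h4⟩

theorem mul_coe_eq_symplFst_add_symplSnd (a : ℍ) (v : ℂ) :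
    a * v = ↑(symplFst a * v) + ↑(symplSnd a * conj v) * qj := by
  ext <;> simp [symplFst, symplSnd, re_mul, imI_mul, imJ_mul, imK_mul]

theorem symplFst_star_mul (a b c d : ℂ) :
    symplFst (star (c + d * qj : ℍ) * (a + b * qj)) = conj c * a + conj b * d := by
  apply Complex.ext <;> simp [symplFst, re_mul, imI_mul, imJ_mul, imK_mul] <;> ring

theorem symplFst_mul_coe_sub_coe_mul (x : ℍ) (z : ℂ) : symplFst (x * z - z * x) = 0 := by
  apply Complex.ext <;> simp [symplFst] <;> ring

theorem star_coeComplex (z : ℂ) : star (z : ℍ) = ↑(conj z) := by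
  ext <;> simp

theorem sq_eq_two_re_smul_sub_normSq (x : ℍ) :
    x ^ 2 = (2 * x.re) • x - algebraMap ℝ ℍ (normSq x) := by
  ext <;> simp [sq, normSq_def'] <;> ring

theorem normSq_eq_re_sq_add_norm_im_sq (x : ℍ) : normSq x = x.re ^ 2 + ‖x.im‖ ^ 2 := by
  rw [sq ‖x.im‖, ← normSq_eq_norm_mul_self, normSq_def', normSq_def']
  simp only [re_im, imI_im, imJ_im, imK_im]
  ring

/-- The conjugacy class of `x`, i.e. the set of roots in `ℍ` of the real quadratic
`t² - 2 Re(x) t + |x|²`. -/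
def sphereOf (x : ℍ) : Set ℍ := {y | y.re = x.re ∧ normSq y = normSq x}

theorem sq_eq_of_mem_sphereOf {x y : ℍ} (hy : y ∈ sphereOf x) :
    y ^ 2 = (2 * x.re) • y - algebraMap ℝ ℍ (normSq x) := by
  rw [sq_eq_two_re_smul_sub_normSq, hy.1, hy.2]

theorem sphereOf_eq_of_mem {x y : ℍ} (h : y ∈ sphereOf x) : sphereOf y = sphereOf x := by
  ext w
  simp only [sphereOf, Set.mem_ofPred_eq, h.1, h.2]

theorem coe_conj_mem_sphereOf_coe (z : ℂ) : ((conj z : ℂ) : ℍ) ∈ sphereOf z := by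
  simp [sphereOf, normSq_def']

theorem sphereOf_coe_infinite {z : ℂ} (hz : z.im ≠ 0) : (sphereOf z).Infinite := by
  set ρ := |z.im|
  have hρ : 0 < ρ := abs_pos.mpr hz
  refine Set.infinite_of_injOn_mapsTo (s := Set.Icc (-ρ) ρ)
    (f := fun t => (⟨z.re, t, √(ρ ^ 2 - t ^ 2), 0⟩ : ℍ))
    (fun t _ u _ h => congrArg QuaternionAlgebra.imI h) (fun t ht => ?_)
    (Set.Icc_infinite (by linarith))
  have : 0 ≤ ρ ^ 2 - t ^ 2 := sub_nonneg.mpr (sq_le_sq' ht.1 ht.2)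
  refine ⟨rfl, ?_⟩
  dsimp only
  erw [normSq_def', normSq_def', Real.sq_sqrt this, sq_abs]
  simp

def sphereRep (x : ℍ) : ℂ := ⟨x.re, ‖x.im‖⟩

theorem coe_sphereRep_mem_sphereOf (x : ℍ) : (sphereRep x : ℍ) ∈ sphereOf x := by
  refine ⟨rfl, ?_⟩
  rw [normSq_eq_re_sq_add_norm_im_sq x, normSq_def']
  simp [sphereRep]

theorem coe_conj_sphereRep_mem_sphereOf (x : ℍ) :
    ((conj (sphereRep x) : ℂ) : ℍ) ∈ sphereOf x := by
  rw [← sphereOf_eq_of_mem (coe_sphereRep_mem_sphereOf x)]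
  exact coe_conj_mem_sphereOf_coe _

theorem mem_sphereOf_of_sphereRep_eq {x y : ℍ} (h : sphereRep y = sphereRep x) :
    y ∈ sphereOf x := by
  simp only [sphereRep, Complex.ext_iff] at h
  exact ⟨h.1, by rw [normSq_eq_re_sq_add_norm_im_sq, normSq_eq_re_sq_add_norm_im_sq, h.1, h.2]⟩

theorem eq_of_sphereRep_eq_of_im_eq_zero {x y : ℍ} (h : sphereRep x = sphereRep y)
    (h0 : (sphereRep x).im = 0) : x = y := by
  simp only [sphereRep, Complex.ext_iff] at h h0
  have hx : x.im = 0 := norm_eq_zero.mp h0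
  have hy : y.im = 0 := norm_eq_zero.mp (h.2 ▸ h0)
  rw [← re_add_im x, ← re_add_im y, h.1, hx, hy]

def leftEval (n : ℕ) (q : ℕ → ℍ) (x : ℍ) : ℍ := ∑ m ∈ Finset.range (n + 1), q m * x ^ m

section LeftEval

variable {n : ℕ} {q : ℕ → ℍ}

theorem exists_leftEval_eq_mul_sub {x : ℍ} (hx : leftEval n q x = 0) :
    ∃ B : ℍ, ∀ y ∈ sphereOf x, leftEval n q y = B * (y - x) := by
  obtain ⟨a, b, h⟩ :=
    exists_sum_mul_pow_eq_of_sq_eq (2 * x.re) (normSq x) (Finset.range (n + 1)) q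
  have ha : a = -(b * x) := eq_neg_of_add_eq_zero_left <| by
    rw [← h x (sq_eq_of_mem_sphereOf ⟨rfl, rfl⟩)]
    exact hx
  refine ⟨b, fun y hy => ?_⟩
  rw [leftEval, h y (sq_eq_of_mem_sphereOf hy), ha, mul_sub]
  abel

theorem leftEval_eq_zero_of_mem_sphereOf {x x' : ℍ} (hx : leftEval n q x = 0)
    (hx' : leftEval n q x' = 0) (hmem : x' ∈ sphereOf x) (hne : x' ≠ x) :
    ∀ y ∈ sphereOf x, leftEval n q y = 0 := by
  obtain ⟨B, hB⟩ := exists_leftEval_eq_mul_sub hx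
  have hB0 : B = 0 := by
    rw [hB x' hmem] at hx'
    exact (mul_eq_zero.mp hx').resolve_right (sub_ne_zero.mpr hne)
  intro y hy
  rw [hB y hy, hB0, zero_mul]

theorem leftEval_coe (w : ℂ) :
    leftEval n q w = ↑(f1 n q w) + ↑(f2 n q (conj w)) * qj := by
  simp_rw [leftEval, f1, f2, ← coe_ofComplex, map_sum, Finset.sum_mul, ← Finset.sum_add_distrib,
    ← map_pow, coe_ofComplex, mul_coe_eq_symplFst_add_symplSnd, map_pow]
  rfl

theorem leftEval_coe_eq_zero_iff (z : ℂ) :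
    leftEval n q z = 0 ∧ leftEval n q ↑(conj z) = 0 ↔
      f1 n q z = 0 ∧ f2 n q z = 0 ∧ f1 n q (conj z) = 0 ∧ f2 n q (conj z) = 0 := by
  simp only [leftEval_coe, coe_add_coe_mul_qj_eq_zero_iff, Complex.conj_conj]
  tauto

theorem injOn_sphereRep_of_no_common_nonreal_root
    (hno : ¬ ∃ z : ℂ, z.im ≠ 0 ∧ f1 n q z = 0 ∧ f2 n q z = 0 ∧
      f1 n q (conj z) = 0 ∧ f2 n q (conj z) = 0) :
    Set.InjOn sphereRep {x | leftEval n q x = 0} := by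
  intro x hx y hy hxy
  by_contra hne
  have him : (sphereRep x).im ≠ 0 := fun h0 => hne (eq_of_sphereRep_eq_of_im_eq_zero hxy h0)
  have hvan := leftEval_eq_zero_of_mem_sphereOf hx hy (mem_sphereOf_of_sphereRep_eq hxy.symm)
    (Ne.symm hne)
  exact hno ⟨sphereRep x, him, (leftEval_coe_eq_zero_iff _).mp
    ⟨hvan _ (coe_sphereRep_mem_sphereOf x), hvan _ (coe_conj_sphereRep_mem_sphereOf x)⟩⟩

theorem ptilde_eq_symplFst (z : ℂ) :
    ptilde n q z = symplFst (star (leftEval n q ↑(conj z)) * leftEval n q z) := by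
  have hf1b : f1b n q z = conj (f1 n q (conj z)) := by simp [f1b, f1, map_sum]
  have hf2b : f2b n q z = conj (f2 n q (conj z)) := by simp [f2b, f2, map_sum]
  rw [leftEval_coe, leftEval_coe, Complex.conj_conj, symplFst_star_mul, ptilde, hf1b, hf2b]
  ring

theorem ptilde_sphereRep_eq_zero {x : ℍ} (hx : leftEval n q x = 0) :
    ptilde n q (sphereRep x) = 0 := by
  set z := sphereRep x
  obtain ⟨B, hB⟩ := exists_leftEval_eq_mul_sub hx
  have hz := coe_sphereRep_mem_sphereOf x
  have hcomm : (↑z - star x) * (↑z - x) = x * z - z * x := by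
    rw [star_eq_two_re_sub, ← algebraMap_def]
    exact sub_sub_mul_sub_of_sq_eq _ _ (sq_eq_of_mem_sphereOf ⟨rfl, rfl⟩)
      (sq_eq_of_mem_sphereOf hz)
  calc ptilde n q z
      = symplFst (star (B * (↑(conj z) - x)) * (B * (↑z - x))) := by
        rw [ptilde_eq_symplFst, hB _ hz, hB _ (coe_conj_sphereRep_mem_sphereOf x)]
    _ = symplFst (normSq B • (x * z - z * x)) := by
        rw [star_mul, star_sub, star_coeComplex, Complex.conj_conj, ← hcomm, mul_assoc,
          ← mul_assoc (star B), star_mul_self, ← coe_mul_eq_smul, ← mul_assoc, ← mul_assoc,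
          coe_commutes]
    _ = 0 := by rw [symplFst_smul, symplFst_mul_coe_sub_coe_mul, mul_zero]

open Polynomial in
theorem eq_zero_of_forall_ofReal_sum_mul_pow_eq_zero {c : ℕ → ℂ}
    (h : ∀ t : ℝ, ∑ m ∈ Finset.range (n + 1), c m * (t : ℂ) ^ m = 0) : c n = 0 := by
  set P : ℂ[X] := ∑ m ∈ Finset.range (n + 1), C (c m) * X ^ m
  have hP : P = 0 := by
    refine eq_zero_of_infinite_isRoot P (Set.infinite_of_injective_forall_mem
      Complex.ofReal_injective fun t => ?_)
    simpa [P, eval_finsetSum] using h t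
  simpa [P, finsetSum_coeff, coeff_C_mul_X_pow] using congrArg (coeff · n) hP

theorem ptilde_ofReal (t : ℝ) :
    ptilde n q t = (Complex.normSq (f1 n q t) + Complex.normSq (f2 n q t) : ℝ) := by
  have hf1b : f1b n q t = conj (f1 n q t) := by simp [f1b, f1, map_sum]
  have hf2b : f2b n q t = conj (f2 n q t) := by simp [f2b, f2, map_sum]
  rw [ptilde, hf1b, hf2b, Complex.mul_conj, Complex.mul_conj]
  push_cast
  ring

open Polynomial in
theorem finite_setOf_ptilde_eq_zero (hq : q n ≠ 0) : {z | ptilde n q z = 0}.Finite := by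
  set F : (ℍ → ℂ) → ℂ[X] := fun c => ∑ m ∈ Finset.range (n + 1), C (c (q m)) * X ^ m
  set Q := F symplFst * F (conj ∘ symplFst) + F symplSnd * F (conj ∘ symplSnd)
  have heval : ∀ z, ptilde n q z = Q.eval z := fun z => by
    simp [Q, F, ptilde, f1, f1b, f2, f2b, eval_finsetSum, symplFst, symplSnd]
  refine Set.not_infinite.mp fun hinf => ?_
  have hQ : Q = 0 :=
    eq_zero_of_infinite_isRoot Q (by simpa only [IsRoot.def, ← heval] using hinf)
  have hzero : ∀ t : ℝ, f1 n q t = 0 ∧ f2 n q t = 0 := fun t => by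
    have := heval t
    rw [hQ, eval_zero, ptilde_ofReal, Complex.ofReal_eq_zero,
      add_eq_zero_iff_of_nonneg (Complex.normSq_nonneg _) (Complex.normSq_nonneg _)] at this
    simpa only [Complex.normSq_eq_zero] using this
  have h1 := eq_zero_of_forall_ofReal_sum_mul_pow_eq_zero fun t => (hzero t).1
  have h2 := eq_zero_of_forall_ofReal_sum_mul_pow_eq_zero fun t => (hzero t).2
  simp only [Complex.ext_iff, Complex.zero_re, Complex.zero_im] at h1 h2
  exact hq (by ext <;> simp [h1, h2])

end LeftEval

theorem finitely_many_zeros_iff_no_common_nonreal_root_general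
    (n : ℕ) (q : ℕ → Quaternion ℝ) (hq : q n ≠ 0) :
    {x : Quaternion ℝ | ∑ m ∈ Finset.range (n + 1), q m * x ^ m = 0}.Finite ↔
      ¬ ∃ z : ℂ, z.im ≠ 0 ∧ f1 n q z = 0 ∧ f2 n q z = 0 ∧
        f1 n q ((starRingEnd ℂ) z) = 0 ∧ f2 n q ((starRingEnd ℂ) z) = 0 := by
  change {x | leftEval n q x = 0}.Finite ↔ _
  constructor
  · rintro hfin ⟨z, hz, hroots⟩
    obtain ⟨hzero, hzero_conj⟩ := (leftEval_coe_eq_zero_iff z).mpr hroots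
    have hne : ((conj z : ℂ) : ℍ) ≠ z := fun h => hz <| by
      have := congrArg QuaternionAlgebra.imI h
      simp only [imI_coeComplex, Complex.conj_im] at this
      linarith
    exact sphereOf_coe_infinite hz <| hfin.subset
      (leftEval_eq_zero_of_mem_sphereOf hzero hzero_conj (coe_conj_mem_sphereOf_coe z) hne)
  · intro hno
    refine Set.Finite.of_finite_image ((finite_setOf_ptilde_eq_zero hq).subset ?_)
      (injOn_sphereRep_of_no_common_nonreal_root hno)
    rintro _ ⟨x, hx, rfl⟩
    exact ptilde_sphereRep_eq_zero hx

/-- A simple quaternionic polynomial (with `q n ≠ 0` and constant coefficient `0` or `1`)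
has finitely many zeros iff there is no nonreal complex number `z` with
`f₁(z) = f₂(z) = 0` and `f₁(conj z) = f₂(conj z) = 0` (equivalently, iff
`gcd(f₁, f₂, f̄₁, f̄₂)` has no nonreal complex root). -/
theorem finitely_many_zeros_iff_no_common_nonreal_root
    (n : ℕ) (q : ℕ → Quaternion ℝ) (hq : q n ≠ 0) (h0 : q 0 = 0 ∨ q 0 = 1) :
    {x : Quaternion ℝ | ∑ m ∈ Finset.range (n + 1), q m * x ^ m = 0}.Finite ↔
      ¬ ∃ z : ℂ, z.im ≠ 0 ∧ f1 n q z = 0 ∧ f2 n q z = 0 ∧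
        f1 n q ((starRingEnd ℂ) z) = 0 ∧ f2 n q ((starRingEnd ℂ) z) = 0 :=
  finitely_many_zeros_iff_no_common_nonreal_root_general n q hq
end
end

section
/- Let n ∈ ℕ and let q : ℕ → ℍ with q n ≠ 0, and let p(x) = ∑_{m=0}^{n} (q m)·x^m. Then there exists a finite set S ⊆ ℍ with at most ⌊n/2⌋ elements such that every spherical zero of p is conjugate to some element of S; that is, the spherical zeros of p are distributed in at most ⌊n/2⌋ conjugacy classes. -/
/-- `x` is a zero of the simple quaternionic polynomial `∑_{m=0}^{n} (q m)·xᵐ`. -/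
def IsZero (n : ℕ) (q : ℕ → Quaternion ℝ) (x : Quaternion ℝ) : Prop :=
  ∑ m ∈ Finset.range (n + 1), q m * x ^ m = 0

/-- `x` is a spherical zero: it is a nonreal zero all of whose conjugates are also zeros. -/
def IsSphericalZero (n : ℕ) (q : ℕ → Quaternion ℝ) (x : Quaternion ℝ) : Prop :=
  IsZero n q x ∧ ¬(x.imI = 0 ∧ x.imJ = 0 ∧ x.imK = 0) ∧
    ∀ y : Quaternion ℝ, (∃ a : Quaternion ℝ, a ≠ 0 ∧ y = a * x * a⁻¹) → IsZero n q y

/-!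
Write every quaternion as `z + w j` with `z w : ℂ`. Since `j w = conj w j`, on a complex argument
`w` the polynomial takes the value `F(w) + G(conj w) j`, where `F` and `G` are the complex
polynomials whose coefficients are the two halves of the `q m`; as `q n ≠ 0`, one of them is a
nonzero polynomial `H` of degree at most `n`. Every nonreal quaternion is conjugate to some
`z ∈ ℂ` with `Im z > 0`, and `conj z` lies in the same class, so a spherical zero yields a pair
`z, conj z` of distinct roots of `H`. Different classes give disjoint pairs, hence at most `n / 2`
classes.
-/

open Quaternion Polynomial ComplexConjugate Finset GroupWithZero

namespace Quaternion

def j : ℍ := ⟨0, 0, 1, 0⟩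

@[simp] lemma re_j : j.re = 0 := rfl
@[simp] lemma imI_j : j.imI = 0 := rfl
@[simp] lemma imJ_j : j.imJ = 1 := rfl
@[simp] lemma imK_j : j.imK = 0 := rfl

lemma j_ne_zero : j ≠ 0 := fun h => by simpa [j] using congrArg QuaternionAlgebra.imJ h

lemma j_mul_coeComplex (w : ℂ) : j * w = ((conj w : ℂ) : ℍ) * j := by
  ext <;> simp [Quaternion.re_mul, Quaternion.imI_mul, Quaternion.imJ_mul, Quaternion.imK_mul]

lemma isConj_coeComplex_conj (w : ℂ) : IsConj (w : ℍ) ((conj w : ℂ) : ℍ) :=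
  ⟨Units.mk0 j j_ne_zero, j_mul_coeComplex w⟩

def complexPart (q : ℍ) : ℂ := ⟨q.re, q.imI⟩

def jPart (q : ℍ) : ℂ := ⟨q.imJ, q.imK⟩

lemma complexPart_add_jPart_mul_j (q : ℍ) : (complexPart q : ℍ) + jPart q * j = q := by
  ext <;>
    simp [complexPart, jPart, Quaternion.re_mul, Quaternion.imI_mul, Quaternion.imJ_mul,
      Quaternion.imK_mul]

lemma coeComplex_add_mul_j_eq_zero_iff {z w : ℂ} : (z : ℍ) + w * j = 0 ↔ z = 0 ∧ w = 0 := by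
  simp [Quaternion.ext_iff, Complex.ext_iff, and_assoc, Quaternion.re_mul, Quaternion.imI_mul,
    Quaternion.imJ_mul, Quaternion.imK_mul]

lemma coeComplex_pow (w : ℂ) (m : ℕ) : ((w ^ m : ℂ) : ℍ) = (w : ℍ) ^ m :=
  map_pow ofComplex w m

lemma coeComplex_sum {ι : Type*} (s : Finset ι) (f : ι → ℂ) :
    ((∑ i ∈ s, f i : ℂ) : ℍ) = ∑ i ∈ s, (f i : ℍ) :=
  map_sum ofComplex f s

lemma mul_coeComplex_pow (q : ℍ) (w : ℂ) (m : ℕ) :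
    q * (w : ℍ) ^ m = ↑(complexPart q * w ^ m) + ↑(jPart q * conj w ^ m) * j := by
  have hj : j * (w : ℍ) ^ m = ((conj w : ℂ) : ℍ) ^ m * j :=
    SemiconjBy.pow_right (j_mul_coeComplex w) m
  conv_lhs => rw [← complexPart_add_jPart_mul_j q]
  rw [add_mul, mul_assoc, hj, coeComplex_mul, coeComplex_mul, coeComplex_pow, coeComplex_pow,
    mul_assoc]

lemma im_ne_zero_iff {x : ℍ} : x.im ≠ 0 ↔ ¬(x.imI = 0 ∧ x.imJ = 0 ∧ x.imK = 0) := by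
  simp [Quaternion.ext_iff]

lemma exists_isConj_coeComplex (x : ℍ) (hx : x.im ≠ 0) :
    ∃ z : ℂ, 0 < z.im ∧ IsConj (z : ℍ) x := by
  set r := ‖x.im‖
  have hr : 0 < r := norm_pos_iff.2 hx
  have hr2 : r ^ 2 = x.imI ^ 2 + x.imJ ^ 2 + x.imK ^ 2 := by
    rw [sq, ← normSq_eq_norm_mul_self, normSq_def']; simp
  refine ⟨⟨x.re, r⟩, hr, ?_⟩
  by_cases hc : x.im + ((⟨0, r⟩ : ℂ) : ℍ) = 0
  · convert isConj_coeComplex_conj ⟨x.re, r⟩ using 1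
    have hI : x.imI = -r :=
      eq_neg_of_add_eq_zero_left (by simpa using congrArg QuaternionAlgebra.imI hc)
    have hJ : x.imJ = 0 := by simpa using congrArg QuaternionAlgebra.imJ hc
    have hK : x.imK = 0 := by simpa using congrArg QuaternionAlgebra.imK hc
    ext <;> simp [hI, hJ, hK]
  · refine ⟨Units.mk0 _ hc, show _ * _ = x * _ from ?_⟩
    -- `c = im x + r i` works because `(im x)² = (r i)² = -r²` gives `c (r i) = (im x) c`.
    ext <;>
      simp [Quaternion.re_mul, Quaternion.imI_mul, Quaternion.imJ_mul, Quaternion.imK_mul] <;>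
      nlinarith

end Quaternion

namespace Polynomial

variable {R : Type*} [Semiring R]

noncomputable def ofCoeffsUpTo (n : ℕ) (c : ℕ → R) : R[X] :=
  ∑ m ∈ range (n + 1), C (c m) * X ^ m

lemma eval_ofCoeffsUpTo (n : ℕ) (c : ℕ → R) (w : R) :
    (ofCoeffsUpTo n c).eval w = ∑ m ∈ range (n + 1), c m * w ^ m := by
  simp [ofCoeffsUpTo, eval_finsetSum]

lemma coeff_ofCoeffsUpTo_self (n : ℕ) (c : ℕ → R) : (ofCoeffsUpTo n c).coeff n = c n := by
  simp [ofCoeffsUpTo, coeff_C_mul, coeff_X_pow]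

lemma natDegree_ofCoeffsUpTo_le (n : ℕ) (c : ℕ → R) : (ofCoeffsUpTo n c).natDegree ≤ n :=
  natDegree_sum_le_of_forall_le _ _ fun _ hm =>
    (natDegree_C_mul_X_pow_le _ _).trans (Nat.lt_succ_iff.mp (mem_range.mp hm))

lemma ofCoeffsUpTo_ne_zero {n : ℕ} {c : ℕ → R} (hc : c n ≠ 0) : ofCoeffsUpTo n c ≠ 0 :=
  fun h => hc (by rw [← coeff_ofCoeffsUpTo_self n c, h, coeff_zero])

lemma two_mul_card_le_natDegree_of_isRoot_conj {H : ℂ[X]} (hH : H ≠ 0) {T : Finset ℂ}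
    (hT : ∀ z ∈ T, 0 < z.im ∧ H.IsRoot z ∧ H.IsRoot (conj z)) : 2 * #T ≤ H.natDegree := by
  classical
  have hdisj : Disjoint T (T.image conj) := by
    refine disjoint_left.2 fun z hz hz' => ?_
    obtain ⟨w, hw, rfl⟩ := mem_image.1 hz'
    have hconj := (hT _ hz).1
    rw [Complex.conj_im] at hconj
    linarith [(hT _ hw).1]
  calc 2 * #T = #(T ∪ T.image conj) := by
        rw [card_union_of_disjoint hdisj, card_image_of_injective _ (RingHom.injective _)]; ring
    _ ≤ H.natDegree := card_le_degree_of_subset_roots fun z hz => by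
        rcases mem_union.1 hz with hz | hz
        · exact (mem_roots hH).2 (hT z hz).2.1
        · obtain ⟨w, hw, rfl⟩ := mem_image.1 hz
          exact (mem_roots hH).2 (hT w hw).2.2

end Polynomial

section SphericalZeros

variable {n : ℕ} {q : ℕ → ℍ}

lemma isZero_coeComplex_iff (w : ℂ) :
    IsZero n q w ↔ (ofCoeffsUpTo n (complexPart ∘ q)).eval w = 0 ∧
      (ofCoeffsUpTo n (jPart ∘ q)).eval (conj w) = 0 := by
  simp only [IsZero, mul_coeComplex_pow, sum_add_distrib, ← sum_mul, ← coeComplex_sum,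
    coeComplex_add_mul_j_eq_zero_iff, eval_ofCoeffsUpTo, Function.comp_apply]

lemma exists_ne_zero_isRoot_of_isZero_conj (hq : q n ≠ 0) :
    ∃ H : ℂ[X], H ≠ 0 ∧ H.natDegree ≤ n ∧
      ∀ z : ℂ, IsZero n q z → IsZero n q (conj z : ℂ) → H.IsRoot z := by
  by_cases hc : complexPart (q n) = 0
  · have hj : jPart (q n) ≠ 0 := fun hj => hq <| by
      rw [← complexPart_add_jPart_mul_j (q n), hc, hj]; simp
    refine ⟨_, ofCoeffsUpTo_ne_zero (c := jPart ∘ q) hj, natDegree_ofCoeffsUpTo_le _ _,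
      fun z _ hz => ?_⟩
    simpa using ((isZero_coeComplex_iff _).1 hz).2
  · exact ⟨_, ofCoeffsUpTo_ne_zero (c := complexPart ∘ q) hc, natDegree_ofCoeffsUpTo_le _ _,
      fun z hz _ => ((isZero_coeComplex_iff z).1 hz).1⟩

lemma IsSphericalZero.isZero_of_isConj {x y : ℍ} (hx : IsSphericalZero n q x)
    (hxy : IsConj x y) : IsZero n q y := by
  obtain ⟨c, hc, rfl⟩ := isConj_iff₀.1 hxy
  exact hx.2.2 _ ⟨c, hc, rfl⟩

lemma IsSphericalZero.exists_isConj_coeComplex {x : ℍ} (hx : IsSphericalZero n q x) :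
    ∃ z : ℂ, 0 < z.im ∧ IsConj (z : ℍ) x ∧ IsZero n q z ∧ IsZero n q (conj z : ℂ) := by
  obtain ⟨z, hz, hzx⟩ := Quaternion.exists_isConj_coeComplex x (im_ne_zero_iff.2 hx.2.1)
  exact ⟨z, hz, hzx, hx.isZero_of_isConj hzx.symm,
    hx.isZero_of_isConj (hzx.symm.trans (isConj_coeComplex_conj z))⟩

end SphericalZeros

/-- The spherical zeros of a simple quaternionic polynomial with `q n ≠ 0` are distributed
in at most `⌊n/2⌋` conjugacy classes. -/
theorem spherical_zeros_in_at_most_half_n_conjugacy_classes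
    (n : ℕ) (q : ℕ → Quaternion ℝ) (hq : q n ≠ 0) :
    ∃ S : Finset (Quaternion ℝ), S.card ≤ n / 2 ∧
      ∀ x : Quaternion ℝ, IsSphericalZero n q x →
        ∃ s ∈ S, ∃ a : Quaternion ℝ, a ≠ 0 ∧ x = a * s * a⁻¹ := by
  classical
  obtain ⟨H, hH, hHn, hroot⟩ := exists_ne_zero_isRoot_of_isZero_conj hq
  set T := H.roots.toFinset.filter fun z => 0 < z.im ∧ H.IsRoot (conj z)
  have hT : 2 * #T ≤ n := (two_mul_card_le_natDegree_of_isRoot_conj hH fun z hz => by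
    simp only [T, mem_filter, Multiset.mem_toFinset, mem_roots hH] at hz
    exact ⟨hz.2.1, hz.1, hz.2.2⟩).trans hHn
  refine ⟨T.image (↑), card_image_le.trans (by omega), fun x hx => ?_⟩
  obtain ⟨z, hz, hzx, hz0, hz0'⟩ := hx.exists_isConj_coeComplex
  have hzT : z ∈ T := by
    simp only [T, mem_filter, Multiset.mem_toFinset, mem_roots hH]
    exact ⟨hroot z hz0 hz0', hz, hroot _ hz0' (by simpa using hz0)⟩
  obtain ⟨a, ha, hax⟩ := isConj_iff₀.1 hzx
  exact ⟨z, mem_image_of_mem _ hzT, a, ha, hax.symm⟩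
end

section
/- Let n ∈ ℕ and let q : ℕ → ℍ, with discriminant polynomial p̃ = f₁·f̄₁ + f₂·f̄₂. If x ∈ ℍ is a zero of p(x) = ∑_{m=0}^{n} (q m)·x^m, then the complex number z = x.re + √(x.imI² + x.imJ² + x.imK²)·I is a root of p̃, i.e., p̃(z) = 0. -/
noncomputable section

/-!
A zero `x` of `p` is similar to the complex number `z = x.re + |Im x| i`: `x u = u z` for some
`u ≠ 0`. Since the coefficients sit on the left, `p(x) u = ∑ q_m u z^m = 0`. Splitting
`h = h₁ + h₂ j` with `h₁, h₂ ∈ ℂ` and using `j w = w̄ j`, this becomes the linear system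
`u₁ f₁(z) - ū₂ f₂(z) = 0`, `ū₂ f̄₁(z) + u₁ f̄₂(z) = 0` in the nonzero vector `(u₁, ū₂)`, whose
determinant is `p̃(z)`.
-/

open scoped Quaternion ComplexConjugate
open Finset Quaternion

theorem mul_sub_mul_eq_zero_of_mul_add_mul_eq_zero {K : Type*} [Field K] {a b c d x y : K}
    (hxy : x ≠ 0 ∨ y ≠ 0) (h₁ : a * x + b * y = 0) (h₂ : c * x + d * y = 0) :
    a * d - b * c = 0 := by
  rcases hxy with hx | hy
  · exact (mul_eq_zero.mp (by linear_combination d * h₁ - b * h₂ :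
      x * (a * d - b * c) = 0)).resolve_left hx
  · exact (mul_eq_zero.mp (by linear_combination a * h₂ - c * h₁ :
      y * (a * d - b * c) = 0)).resolve_left hy

namespace Quaternion

/-- The Cayley–Dickson components: `h = cdFst h + cdSnd h * j`. -/
def cdFst : ℍ →+ ℂ where
  toFun h := ⟨h.re, h.imI⟩
  map_zero' := rfl
  map_add' _ _ := rfl

def cdSnd : ℍ →+ ℂ where
  toFun h := ⟨h.imJ, h.imK⟩
  map_zero' := rfl
  map_add' _ _ := rfl

@[simp]
theorem cdFst_apply (h : ℍ) : cdFst h = ⟨h.re, h.imI⟩ := rfl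

@[simp]
theorem cdSnd_apply (h : ℍ) : cdSnd h = ⟨h.imJ, h.imK⟩ := rfl

theorem cdFst_mul (g h : ℍ) : cdFst (g * h) = cdFst g * cdFst h - cdSnd g * conj (cdSnd h) := by
  apply Complex.ext <;> simp [re_mul, imI_mul] <;> ring

theorem cdSnd_mul (g h : ℍ) : cdSnd (g * h) = cdFst g * cdSnd h + cdSnd g * conj (cdFst h) := by
  apply Complex.ext <;> simp [imJ_mul, imK_mul] <;> ring

theorem cdFst_coeComplex (w : ℂ) : cdFst w = w := rfl

theorem cdSnd_coeComplex (w : ℂ) : cdSnd w = 0 := rfl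

theorem cdFst_mul_coeComplex (h : ℍ) (w : ℂ) : cdFst (h * w) = cdFst h * w := by
  rw [cdFst_mul, cdFst_coeComplex, cdSnd_coeComplex, map_zero, mul_zero, sub_zero]

theorem cdSnd_mul_coeComplex (h : ℍ) (w : ℂ) : cdSnd (h * w) = cdSnd h * conj w := by
  rw [cdSnd_mul, cdFst_coeComplex, cdSnd_coeComplex, mul_zero, zero_add]

theorem cdFst_ne_zero_or_cdSnd_ne_zero {h : ℍ} (hh : h ≠ 0) : cdFst h ≠ 0 ∨ cdSnd h ≠ 0 := by
  contrapose! hh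
  obtain ⟨h₁, h₂⟩ := hh
  ext
  exacts [congrArg Complex.re h₁, congrArg Complex.im h₁, congrArg Complex.re h₂,
    congrArg Complex.im h₂]

theorem coeComplex_conj_mul_qk (w : ℂ) : (↑(conj w) : ℍ) * qk = qk * w := by
  ext <;> simp only [re_mul, imI_mul, imJ_mul, imK_mul] <;> simp [qk]

theorem qk_ne_zero : qk ≠ 0 := fun h => by simpa [qk] using congrArg QuaternionAlgebra.imK h

theorem exists_ne_zero_mul_eq_mul_coeComplex (x : ℍ) :
    ∃ u : ℍ, u ≠ 0 ∧
      x * u = u * ((⟨x.re, Real.sqrt (x.imI ^ 2 + x.imJ ^ 2 + x.imK ^ 2)⟩ : ℂ) : ℍ) := by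
  set s := Real.sqrt (x.imI ^ 2 + x.imJ ^ 2 + x.imK ^ 2)
  have hs : s ^ 2 = x.imI ^ 2 + x.imJ ^ 2 + x.imK ^ 2 := Real.sq_sqrt (by positivity)
  -- `u = Im x + s i` works because `(Im x)² = -s² = (s i)²`; when it vanishes, `x` is the
  -- complex number `z̄`, and `k` conjugates `z̄` to `z`.
  by_cases hu : x.im + ((⟨0, s⟩ : ℂ) : ℍ) = 0
  · have hx : x = ↑(conj (⟨x.re, s⟩ : ℂ)) := by
      rw [← re_add_im x, eq_neg_of_add_eq_zero_left hu]
      ext <;> simp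
    have hk := coeComplex_conj_mul_qk ⟨x.re, s⟩
    rw [← hx] at hk
    exact ⟨qk, qk_ne_zero, hk⟩
  · refine ⟨_, hu, ?_⟩
    ext <;> simp [re_mul, imI_mul, imJ_mul, imK_mul] <;> linarith

end Quaternion

theorem cdFst_sum_mul_coeComplex_pow (n : ℕ) (q : ℕ → ℍ) (u : ℍ) (z : ℂ) :
    cdFst (∑ m ∈ range (n + 1), q m * u * ↑(z ^ m)) =
      cdFst u * f1 n q z - conj (cdSnd u) * f2 n q z := by
  rw [map_sum, f1, f2, mul_sum, mul_sum, ← sum_sub_distrib]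
  refine sum_congr rfl fun m _ => ?_
  rw [cdFst_mul_coeComplex, cdFst_mul]
  simp only [cdFst_apply, cdSnd_apply]
  ring

theorem conj_cdSnd_sum_mul_coeComplex_pow (n : ℕ) (q : ℕ → ℍ) (u : ℍ) (z : ℂ) :
    conj (cdSnd (∑ m ∈ range (n + 1), q m * u * ↑(z ^ m))) =
      conj (cdSnd u) * f1b n q z + cdFst u * f2b n q z := by
  rw [map_sum, map_sum, f1b, f2b, mul_sum, mul_sum, ← sum_add_distrib]
  refine sum_congr rfl fun m _ => ?_
  rw [cdSnd_mul_coeComplex, cdSnd_mul, map_mul, map_add, map_mul, map_mul, Complex.conj_conj,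
    Complex.conj_conj]
  simp only [cdFst_apply, cdSnd_apply]
  ring

/-- If `x ∈ ℍ` is a zero of the simple quaternionic polynomial `p`, then the complex number
`z = x.re + √(x.imI² + x.imJ² + x.imK²)·I` is a root of the discriminant polynomial `p̃`. -/
theorem zero_gives_discriminant_root
    (n : ℕ) (q : ℕ → Quaternion ℝ) (x : Quaternion ℝ)
    (hx : ∑ m ∈ Finset.range (n + 1), q m * x ^ m = 0) :
    ptilde n q ⟨x.re, Real.sqrt (x.imI ^ 2 + x.imJ ^ 2 + x.imK ^ 2)⟩ = 0 := by
  obtain ⟨u, hu, hxu⟩ := exists_ne_zero_mul_eq_mul_coeComplex x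
  set z : ℂ := ⟨x.re, Real.sqrt (x.imI ^ 2 + x.imJ ^ 2 + x.imK ^ 2)⟩
  have hpow (m : ℕ) : x ^ m * u = u * ↑(z ^ m) := by
    rw [← coe_ofComplex, map_pow]
    exact (SemiconjBy.pow_right hxu.symm m).symm
  have hsum : ∑ m ∈ range (n + 1), q m * u * ↑(z ^ m) = 0 := by
    simp_rw [mul_assoc, ← hpow, ← mul_assoc, ← sum_mul, hx, zero_mul]
  have h₁ := cdFst_sum_mul_coeComplex_pow n q u z
  have h₂ := conj_cdSnd_sum_mul_coeComplex_pow n q u z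
  rw [hsum, map_zero] at h₁
  rw [hsum, map_zero, map_zero] at h₂
  have hne : cdFst u ≠ 0 ∨ conj (cdSnd u) ≠ 0 :=
    (cdFst_ne_zero_or_cdSnd_ne_zero hu).imp_right (map_ne_zero _).mpr
  have hdet := mul_sub_mul_eq_zero_of_mul_add_mul_eq_zero hne
    (a := f1 n q z) (b := -f2 n q z) (by linear_combination -h₁)
    (c := f2b n q z) (d := f1b n q z) (by linear_combination -h₂)
  rw [ptilde]
  linear_combination hdet
end
end

section
/- Let n ≥ 1 and let q : ℕ → ℍ with q n ≠ 0. Then the right-sided simple quaternionic polynomial has a zero in ℍ, i.e., there exists x ∈ ℍ such that ∑_{m=0}^{n} x^m·(q m) = 0. -/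
/-!
Mathlib's `eval` puts coefficients to the left of the powers, and the right-sided value
`∑ xᵐ qₘ` is the conjugate of the left-sided value `∑ q̄ₘ yᵐ` at `y = x̄`, so it suffices to find
roots of left-sided polynomials `p ∈ ℍ[X]`.

Let `p̄` be `p` with conjugated coefficients. The product `p * p̄` is self-adjoint, so it has real
coefficients and a complex root `z`; then `z` and `z̄`, viewed in `ℍ`, are roots of `p * p̄`. Since
`(p * q)(x) = p(v x v⁻¹) v` with `v = q(x)`, either `p` has a root conjugate to one of them, or `p̄`
vanishes at both. In the latter case the remainder of `p̄` modulo the real minimal polynomial `d`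
of `z` has degree `< deg d ≤ 2` and vanishes at `z` and `z̄`, so `p̄ = d * b`; as `d` is real,
`p = b̄ * d`, which vanishes at `z`.
-/

open Polynomial

namespace Polynomial

section Star

variable {R : Type*} [Semiring R] [StarRing R]

noncomputable instance : Star R[X] := ⟨fun p => p.sum fun n a => monomial n (star a)⟩

@[simp]
theorem coeff_star (p : R[X]) (n : ℕ) : (star p).coeff n = star (p.coeff n) := by
  change (p.sum fun n a => monomial n (star a)).coeff n = _
  simp only [Polynomial.sum, finsetSum_coeff, coeff_monomial, Finset.sum_ite_eq']
  split_ifs with h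
  · rfl
  · rw [notMem_support_iff.mp h, star_zero]

noncomputable instance : StarRing R[X] where
  star_involutive p := by ext; simp
  star_mul p q := by
    ext n
    simp only [coeff_star, coeff_mul, star_sum, star_mul]
    rw [← Finset.Nat.sum_antidiagonal_swap]
    rfl
  star_add p q := by ext; simp

@[simp]
theorem degree_star (p : R[X]) : (star p).degree = p.degree := by
  have : (star p).support = p.support := by ext; simp
  simp only [degree, this]

end Star

section AlgebraMap

variable {R A : Type*} [CommSemiring R] [Semiring A] [Algebra R A]

theorem commute_map_algebraMap (d : R[X]) (b : A[X]) : Commute (d.map (algebraMap R A)) b := by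
  ext n
  rw [coeff_mul, coeff_mul, ← Finset.Nat.sum_antidiagonal_swap]
  simp [Algebra.commutes]

theorem eval_mul_map_algebraMap (x : A) (b : A[X]) (d : R[X]) :
    (b * d.map (algebraMap R A)).eval x = b.eval x * aeval x d := by
  rw [← eval_map_algebraMap]
  exact eval₂_mul_noncomm _ _ fun k => by simp [Algebra.commute_algebraMap_left]

theorem star_map_algebraMap [StarRing R] [TrivialStar R] [StarRing A] [StarModule R A] (d : R[X]) :
    star (d.map (algebraMap R A)) = d.map (algebraMap R A) := by
  ext n
  simp [← algebraMap_star_comm]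

end AlgebraMap

section Ring

variable {R A : Type*} [CommRing R] [Ring A] [Algebra R A] {d : R[X]} {x : A}

theorem eval_modByMonic_map_algebraMap (p : A[X]) (hx : aeval x d = 0) :
    (p %ₘ d.map (algebraMap R A)).eval x = p.eval x := by
  conv_rhs => rw [← modByMonic_add_div p (d.map (algebraMap R A))]
  rw [eval_add, (commute_map_algebraMap d _).eq, eval_mul_map_algebraMap, hx, mul_zero, add_zero]

theorem eval_eq_zero_of_map_algebraMap_dvd_star [StarRing R] [TrivialStar R] [StarRing A]
    [StarModule R A] {p : A[X]} (hdvd : d.map (algebraMap R A) ∣ star p) (hx : aeval x d = 0) :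
    p.eval x = 0 := by
  obtain ⟨b, hb⟩ := hdvd
  rw [← star_star p, hb, star_mul, star_map_algebraMap, eval_mul_map_algebraMap, hx, mul_zero]

end Ring

section DivisionRing

variable {K : Type*} [DivisionRing K]

theorem eval_mul_of_eval_ne_zero (p q : K[X]) {x : K} (hq : q.eval x ≠ 0) :
    (p * q).eval x = p.eval (q.eval x * x * (q.eval x)⁻¹) * q.eval x := by
  induction p using Polynomial.induction_on' with
  | add p₁ p₂ h₁ h₂ => rw [add_mul, eval_add, eval_add, h₁, h₂, add_mul]
  | monomial n a =>
    have hconj := GroupWithZero.conj_pow₀ (s := n) (d := x) (inv_ne_zero hq)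
    rw [inv_inv] at hconj
    rw [← C_mul_X_pow_eq_monomial, mul_assoc, (commute_X_pow q n).eq, eval_C_mul,
      eval_mul_X_pow, eval_C_mul, eval_X_pow, hconj, mul_assoc, mul_assoc,
      inv_mul_cancel₀ hq, mul_one]

theorem eq_zero_of_degree_le_one_of_eval_eq_zero {p : K[X]} (hp : p.degree ≤ 1) {x y : K}
    (hxy : x ≠ y) (hx : p.eval x = 0) (hy : p.eval y = 0) : p = 0 := by
  rw [eq_X_add_C_of_degree_le_one hp] at hx hy ⊢
  simp only [eval_add, eval_C_mul, eval_C, eval_X] at hx hy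
  have h1 : p.coeff 1 = 0 := by
    have : p.coeff 1 * (x - y) = 0 := by
      rw [mul_sub, ← add_sub_add_right_eq_sub _ _ (p.coeff 0), hx, hy, sub_zero]
    exact (mul_eq_zero.mp this).resolve_right (sub_ne_zero.mpr hxy)
  have h0 : p.coeff 0 = 0 := by simpa [h1] using hx
  simp [h0, h1]

theorem exists_eval_eq_zero_of_eval_mul_eq_zero {p q : K[X]} {x : K} (hpq : (p * q).eval x = 0)
    (hq : q.eval x ≠ 0) : ∃ y, p.eval y = 0 := by
  rw [eval_mul_of_eval_ne_zero p q hq] at hpq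
  exact ⟨_, (mul_eq_zero.mp hpq).resolve_right hq⟩

end DivisionRing

end Polynomial

namespace Quaternion

open ComplexConjugate

instance {R : Type*} [CommRing R] [StarRing R] [TrivialStar R] : StarModule R ℍ[R] :=
  ⟨fun r a => by rw [Quaternion.star_smul, star_trivial r]⟩

theorem exists_map_eq_mul_star_self (p : ℍ[ℝ][X]) :
    ∃ h : ℝ[X], h.map (algebraMap ℝ ℍ[ℝ]) = p * star p := by
  rw [← mem_lifts, lifts_iff_coeff_lifts]
  intro n
  have : star ((p * star p).coeff n) = (p * star p).coeff n := by
    rw [← coeff_star, (IsSelfAdjoint.mul_star_self p).star_eq]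
  exact ⟨_, (star_eq_self.mp this).symm⟩

theorem aeval_ofComplex_minpoly (z : ℂ) : aeval (ofComplex z) (minpoly ℝ z) = 0 := by
  rw [aeval_algHom_apply, minpoly.aeval, map_zero]

theorem map_minpoly_dvd {q : ℍ[ℝ][X]} {z : ℂ} (h₀ : q.eval (ofComplex z) = 0)
    (h₁ : q.eval (ofComplex (conj z)) = 0) : (minpoly ℝ z).map (algebraMap ℝ ℍ[ℝ]) ∣ q := by
  set d := minpoly ℝ z
  have hd : d.Monic := minpoly.monic (Algebra.IsIntegral.isIntegral z)
  rw [← modByMonic_eq_zero_iff_dvd (hd.map _)]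
  have hz₀ : aeval (ofComplex z) d = 0 := aeval_ofComplex_minpoly z
  have hz₁ : aeval (ofComplex (conj z)) d = 0 := by
    rw [aeval_algHom_apply, aeval_conj, minpoly.aeval, map_zero, map_zero]
  have hr₀ := (eval_modByMonic_map_algebraMap q hz₀).trans h₀
  have hr₁ := (eval_modByMonic_map_algebraMap q hz₁).trans h₁
  have hdeg : (q %ₘ d.map (algebraMap ℝ ℍ[ℝ])).degree < d.natDegree := by
    simpa [degree_map, degree_eq_natDegree hd.ne_zero] using
      degree_modByMonic_lt q (hd.map (algebraMap ℝ ℍ[ℝ]))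
  by_cases hz : conj z = z
  · have hd1 : d.natDegree = 1 := by
      obtain ⟨r, rfl⟩ := Complex.conj_eq_iff_real.mp hz
      exact minpoly.natDegree_eq_one_iff.mpr ⟨r, rfl⟩
    rw [hd1, Nat.cast_one, Nat.WithBot.lt_one_iff_le_zero] at hdeg
    rw [eq_C_of_degree_le_zero hdeg, eval_C] at hr₀
    rw [eq_C_of_degree_le_zero hdeg, hr₀, C_0]
  · have hd2 : d.natDegree ≤ 2 := Complex.finrank_real_complex ▸ minpoly.natDegree_le z
    refine eq_zero_of_degree_le_one_of_eval_eq_zero ?_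
      ((RingHom.injective (ofComplex : ℂ →+* ℍ[ℝ])).ne (Ne.symm hz)) hr₀ hr₁
    exact Order.le_of_lt_succ (hdeg.trans_le (by exact_mod_cast hd2) : _ < (2 : WithBot ℕ))

theorem exists_eval_eq_zero {p : ℍ[ℝ][X]} (hp : 0 < p.degree) : ∃ x, p.eval x = 0 := by
  obtain ⟨h, hh⟩ := exists_map_eq_mul_star_self p
  have hdeg : 0 < (h.map (algebraMap ℝ ℂ)).degree := by
    rw [degree_map, ← degree_map_eq_of_injective (algebraMap ℝ ℍ[ℝ]).injective, hh, degree_mul,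
      degree_star]
    exact Right.add_pos' hp hp
  obtain ⟨z, hz⟩ := Complex.exists_root hdeg
  have hroot : ∀ w, aeval w h = 0 → (p * star p).eval (ofComplex w) = 0 := fun w hw => by
    rw [← hh, eval_map_algebraMap, aeval_algHom_apply, hw, map_zero]
  by_contra! hnone
  have hstar : ∀ w, aeval w h = 0 → (star p).eval (ofComplex w) = 0 := fun w hw => by
    by_contra hne
    obtain ⟨y, hy⟩ := exists_eval_eq_zero_of_eval_mul_eq_zero (hroot w hw) hne
    exact hnone y hy
  rw [IsRoot, eval_map_algebraMap] at hz
  have hdvd := map_minpoly_dvd (hstar z hz) (hstar _ (by rw [aeval_conj, hz, map_zero]))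
  exact hnone _ (eval_eq_zero_of_map_algebraMap_dvd_star hdvd (aeval_ofComplex_minpoly z))

end Quaternion

/-- Any right-sided simple quaternionic polynomial equation `∑_{m=0}^{n} xᵐ·(q m) = 0`
with `n ≥ 1` and `q n ≠ 0` has a root in the quaternions. -/
theorem right_sided_simple_quaternionic_polynomial_has_root
    (n : ℕ) (hn : 1 ≤ n) (q : ℕ → Quaternion ℝ) (hq : q n ≠ 0) :
    ∃ x : Quaternion ℝ, ∑ m ∈ Finset.range (n + 1), x ^ m * q m = 0 := by
  set p : (Quaternion ℝ)[X] := ∑ m ∈ Finset.range (n + 1), monomial m (star (q m))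
  have hcoeff : p.coeff n = star (q n) := by simp [p, finsetSum_coeff, coeff_monomial]
  have hdeg : 0 < p.degree :=
    (WithBot.coe_pos.mpr hn).trans_le (le_degree_of_ne_zero (by rwa [hcoeff, star_ne_zero]))
  obtain ⟨y, hy⟩ := Quaternion.exists_eval_eq_zero hdeg
  refine ⟨star y, ?_⟩
  have hstar_eval : star (p.eval y) = ∑ m ∈ Finset.range (n + 1), star y ^ m * q m := by
    simp [p, eval_finsetSum, star_sum, star_mul, star_pow]
  rw [← hstar_eval, hy, star_zero]
end
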